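/- arXiv:1607.08745 — 6 statements merged into one kernel-verified Lean document; each statement's English description precedes it below -/
import Mathlib

section
/- Let I be a real interval and I₁ ⊆ I a subinterval with |I₁| > 1, and let g : ℝ → ℝ be any function. Then |∑_{n ∈ I₁} e(g(n))| ≪ log(1 + |I|) · sup_{γ ∈ [0,1]} |∑_{n ∈ I} e(g(n) + γ n)|, where the implied constant is absolute. -/
open Complex

noncomputable def e (x : ℝ) : ℂ := Complex.exp (2 * Real.pi * Complex.I * x)

namespace Stmt3Aux
open Real intervalIntegral

lemma e_add (x y : ℝ) : e (x + y) = e x * e y := by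
  rw [e, e, e, ← Complex.exp_add]; push_cast; ring_nf

lemma norm_e (x : ℝ) : ‖e x‖ = 1 := by
  simp [e, Complex.norm_exp]

lemma e_cont : Continuous e := by
  unfold e; fun_prop

lemma e_zero : e 0 = 1 := by simp [e]

lemma e_ne_zero (x : ℝ) : e x ≠ 0 := Complex.exp_ne_zero _

lemma e_zpow (x : ℝ) (m : ℤ) : e (x * m) = (e x) ^ m := by
  rw [e, e, ← Complex.exp_int_mul]; push_cast; ring_nf

lemma e_integral (k : ℤ) (hk : k ≠ 0) : ∫ γ in (0:ℝ)..1, e (γ * k) = 0 := by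
  have h : ∀ γ : ℝ, e (γ * k) = Complex.exp ((2 * Real.pi * Complex.I * k) * γ) := by
    intro γ; rw [e]; push_cast; ring_nf
  rw [intervalIntegral.integral_congr (fun γ _ => h γ)]
  rw [integral_exp_mul_complex (by simp [Real.pi_ne_zero, Complex.I_ne_zero, hk])]
  simp [mul_comm (2 * (Real.pi:ℂ) * Complex.I) (k:ℂ), Complex.exp_int_mul_two_pi_mul_I]

lemma sum_Icc_zpow (z : ℂ) (hz : z ≠ 0) (A B : ℤ) (h : A ≤ B) :
    ∑ m ∈ Finset.Icc A B, z ^ m = z ^ A * ∑ i ∈ Finset.range (B + 1 - A).toNat, z ^ i := by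
  rw [Finset.mul_sum]
  refine Finset.sum_nbij' (fun m => (m - A).toNat) (fun i => A + i) ?_ ?_ ?_ ?_ ?_ <;>
    intro m hm <;> simp [Finset.mem_Icc, Finset.mem_range] at hm ⊢ <;>
    try omega
  rw [← zpow_natCast z, ← zpow_add₀ hz]
  congr 1; omega

lemma tel (z : ℂ) (hz : z ≠ 0) (A B : ℤ) (h : A ≤ B) :
    (z - 1) * ∑ m ∈ Finset.Icc A B, z ^ m = z ^ (B + 1) - z ^ A := by
  rcases eq_or_ne z 1 with rfl | hz1
  · simp
  · have h2 : ((B + 1 - A).toNat : ℤ) = B + 1 - A := by omega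
    rw [sum_Icc_zpow z hz A B h, geom_sum_eq hz1, ← zpow_natCast z, h2,
      mul_comm (z ^ A), ← mul_assoc, mul_div_cancel₀ _ (sub_ne_zero.2 hz1),
      sub_mul, one_mul, ← zpow_add₀ hz, sub_add_cancel]

lemma geom_bound (z : ℂ) (hz : ‖z‖ = 1) (A B : ℤ) :
    ‖z - 1‖ * ‖∑ m ∈ Finset.Icc A B, z ^ m‖ ≤ 2 := by
  rcases le_or_gt A B with h | h
  · have hz0 : z ≠ 0 := by intro h0; simp [h0] at hz
    rw [← norm_mul, tel z hz0 A B h]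
    calc ‖z ^ (B+1) - z ^ A‖ ≤ ‖z ^ (B+1)‖ + ‖z ^ A‖ := norm_sub_le _ _
      _ ≤ 2 := by rw [norm_zpow, norm_zpow, hz]; norm_num
  · rw [Finset.Icc_eq_empty (by omega)]
    simp

lemma core (β : ℝ) (h0 : 0 < β) (h2 : β ≤ 1/2) (w : ℂ)
    (him : |w.im| = Real.sin (2*π*β)) (hre : w.re = Real.cos (2*π*β) - 1) :
    2*β ≤ ‖w‖ := by
  rcases le_or_gt β (1/4) with hb | hb
  · calc 2*β ≤ 2/π * (2*π*β) := by
          rw [div_mul_eq_mul_div, mul_comm, le_div_iff₀ Real.pi_pos]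
          nlinarith [Real.pi_pos]
      _ ≤ Real.sin (2*π*β) := Real.mul_le_sin (by positivity) (by nlinarith [Real.pi_pos])
      _ = |w.im| := him.symm
      _ ≤ ‖w‖ := by exact Complex.abs_im_le_norm w
  · have hc : Real.cos (2*π*β) ≤ 0 :=
      Real.cos_nonpos_of_pi_div_two_le_of_le (by nlinarith [Real.pi_pos]) (by nlinarith [Real.pi_pos])
    calc 2*β ≤ 1 := by linarith
      _ ≤ |w.re| := by
          rw [hre, abs_sub_comm, _root_.abs_of_nonneg (by linarith)]; linarith
      _ ≤ ‖w‖ := by exact Complex.abs_re_le_norm w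

lemma kernel_lower (γ : ℝ) (h0 : 0 < γ) (h1 : γ < 1) :
    2 * min γ (1 - γ) ≤ ‖e (-γ) - 1‖ := by
  have hrw : 2 * (π:ℂ) * Complex.I * (-γ:ℝ) = ((-(2*π*γ) : ℝ)) * Complex.I := by
    push_cast; ring
  have hre : (e (-γ) - 1).re = Real.cos (2*π*γ) - 1 := by
    rw [e, hrw, Complex.sub_re, Complex.exp_ofReal_mul_I_re, Real.cos_neg, Complex.one_re]
  have him : (e (-γ) - 1).im = -Real.sin (2*π*γ) := by
    rw [e, hrw, Complex.sub_im, Complex.exp_ofReal_mul_I_im, Real.sin_neg, Complex.one_im, sub_zero]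
  rcases le_or_gt γ (1/2) with h | h
  · rw [min_eq_left (by linarith)]
    refine core γ h0 h _ ?_ hre
    rw [him, abs_neg, _root_.abs_of_nonneg]
    exact Real.sin_nonneg_of_nonneg_of_le_pi (by positivity) (by nlinarith [Real.pi_pos])
  · rw [min_eq_right (by linarith)]
    refine core (1-γ) (by linarith) (by linarith) _ ?_ ?_
    · rw [him, abs_neg, show 2*π*γ = 2*π - 2*π*(1-γ) by ring, Real.sin_two_pi_sub, abs_neg,
        _root_.abs_of_nonneg]
      exact Real.sin_nonneg_of_nonneg_of_le_pi (by nlinarith [Real.pi_pos]) (by nlinarith [Real.pi_pos])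
    · rw [hre, show 2*π*γ = 2*π - 2*π*(1-γ) by ring, Real.cos_two_pi_sub]

lemma int_est (K : ℝ → ℝ) (hK : Continuous K) (N : ℝ) (hN : 1 ≤ N)
    (hKN : ∀ γ ∈ Set.Icc (0:ℝ) 1, K γ ≤ N)
    (hKmin : ∀ γ, 0 < γ → γ < 1 → K γ ≤ (min γ (1-γ))⁻¹) :
    ∫ γ in (0:ℝ)..1, K γ ≤ 2 + 2 * Real.log N := by
  have hlogN : 0 ≤ Real.log N := Real.log_nonneg hN
  rcases le_or_gt N 2 with h2 | h2
  · calc ∫ γ in (0:ℝ)..1, K γ ≤ ∫ _ in (0:ℝ)..1, N := by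
          apply integral_mono_on one_pos.le (hK.intervalIntegrable _ _)
            (intervalIntegrable_const) hKN
      _ = N := by simp
      _ ≤ 2 + 2 * Real.log N := by linarith
  · set δ : ℝ := N⁻¹ with hδ
    have hN0 : 0 < N := by linarith
    have hδ0 : 0 < δ := by positivity
    have hδhalf : δ ≤ 1/2 := by
      rw [hδ]; rw [inv_le_comm₀ hN0 (by norm_num)]; linarith
    have hint : ∀ u v : ℝ, IntervalIntegrable K MeasureTheory.volume u v :=
      fun u v => hK.intervalIntegrable u v
    have split : ∫ γ in (0:ℝ)..1, K γ =
        (∫ γ in (0:ℝ)..δ, K γ) + (∫ γ in δ..(1/2 : ℝ), K γ)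
        + (∫ γ in (1/2 : ℝ)..(1-δ), K γ) + (∫ γ in (1-δ)..1, K γ) := by
      rw [integral_add_adjacent_intervals (hint 0 δ) (hint δ (1/2)),
        integral_add_adjacent_intervals (hint 0 (1/2)) (hint (1/2) (1-δ)),
        integral_add_adjacent_intervals (hint 0 (1-δ)) (hint (1-δ) 1)]
    have b1 : ∫ γ in (0:ℝ)..δ, K γ ≤ 1 := by
      calc ∫ γ in (0:ℝ)..δ, K γ ≤ ∫ _ in (0:ℝ)..δ, N := by
            apply integral_mono_on hδ0.le (hint 0 δ) intervalIntegrable_const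
            intro x hx
            exact hKN x ⟨hx.1, by linarith [hx.2]⟩
        _ = δ * N := by simp
        _ = 1 := by rw [hδ]; field_simp
    have b4 : ∫ γ in (1-δ)..1, K γ ≤ 1 := by
      calc ∫ γ in (1-δ)..1, K γ ≤ ∫ _ in (1-δ)..1, N := by
            apply integral_mono_on (by linarith) (hint _ _) intervalIntegrable_const
            intro x hx
            exact hKN x ⟨by linarith [hx.1], hx.2⟩
        _ = δ * N := by simp
        _ = 1 := by rw [hδ]; field_simp
    have hinv : IntervalIntegrable (fun x : ℝ => x⁻¹) MeasureTheory.volume δ (1/2) := by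
      apply intervalIntegrable_inv
      · intro x hx
        rcases hx with ⟨hx1, _⟩
        simp only [min_le_iff] at hx1
        intro h0
        rcases hx1 with h|h <;> nlinarith
      · exact continuousOn_id
    have b2 : ∫ γ in δ..(1/2:ℝ), K γ ≤ Real.log N := by
      calc ∫ γ in δ..(1/2:ℝ), K γ ≤ ∫ γ in δ..(1/2:ℝ), γ⁻¹ := by
            apply integral_mono_on hδhalf (hint _ _) hinv
            intro x hx
            have hx0 : 0 < x := lt_of_lt_of_le hδ0 hx.1
            have hx1 : x < 1 := by linarith [hx.2]
            calc K x ≤ (min x (1-x))⁻¹ := hKmin x hx0 hx1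
              _ = x⁻¹ := by rw [min_eq_left (by linarith [hx.2])]
        _ = Real.log ((1/2)/δ) := integral_inv_of_pos hδ0 (by norm_num)
        _ = Real.log (N/2) := by rw [hδ]; congr 1; field_simp
        _ ≤ Real.log N := Real.log_le_log (by positivity) (by linarith)
    have b3 : ∫ γ in (1/2:ℝ)..(1-δ), K γ ≤ Real.log N := by
      calc ∫ γ in (1/2:ℝ)..(1-δ), K γ ≤ ∫ γ in (1/2:ℝ)..(1-δ), (1-γ)⁻¹ := by
            apply integral_mono_on (by linarith) (hint _ _)
            · have : IntervalIntegrable (fun x : ℝ => (1-x)⁻¹) MeasureTheory.volume (1/2) (1-δ) := by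
                apply intervalIntegrable_inv
                · intro x hx
                  rcases hx with ⟨hx1, hx2⟩
                  simp only [min_le_iff, le_max_iff] at hx1 hx2
                  intro h0
                  rcases hx1 with h|h <;> rcases hx2 with h'|h' <;> nlinarith
                · fun_prop
              exact this
            · intro x hx
              have hx0 : 0 < x := by linarith [hx.1]
              have hx1 : x < 1 := by linarith [hx.2]
              calc K x ≤ (min x (1-x))⁻¹ := hKmin x hx0 hx1
                _ = (1-x)⁻¹ := by rw [min_eq_right (by linarith [hx.1])]
        _ = ∫ x in (1 - (1-δ))..(1 - (1/2:ℝ)), x⁻¹ :=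
              integral_comp_sub_left (fun x : ℝ => x⁻¹) 1
        _ = ∫ x in δ..(1/2:ℝ), x⁻¹ := by norm_num
        _ = Real.log ((1/2)/δ) := integral_inv_of_pos hδ0 (by norm_num)
        _ = Real.log (N/2) := by rw [hδ]; congr 1; field_simp
        _ ≤ Real.log N := Real.log_le_log (by positivity) (by linarith)
    rw [split]; linarith

lemma ortho (A B A₁ B₁ : ℤ) (hsub : Finset.Icc A₁ B₁ ⊆ Finset.Icc A B) (g : ℝ → ℝ) :
    ∫ γ in (0:ℝ)..1,
        (∑ m ∈ Finset.Icc A₁ B₁, e (-(γ * m))) * (∑ n ∈ Finset.Icc A B, e (g n + γ * n))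
      = ∑ n ∈ Finset.Icc A₁ B₁, e (g n) := by
  have key : ∀ γ : ℝ, (∑ m ∈ Finset.Icc A₁ B₁, e (-(γ * m))) *
      (∑ n ∈ Finset.Icc A B, e (g n + γ * n))
      = ∑ m ∈ Finset.Icc A₁ B₁, ∑ n ∈ Finset.Icc A B,
          e (g n) * e (γ * ((n - m : ℤ))) := by
    intro γ
    rw [Finset.sum_mul_sum]
    refine Finset.sum_congr rfl fun m _ => Finset.sum_congr rfl fun n _ => ?_
    rw [← e_add, ← e_add]
    congr 1; push_cast; ring
  rw [intervalIntegral.integral_congr (fun γ _ => key γ)]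
  have cont : ∀ (c : ℝ) (k : ℤ), Continuous fun γ : ℝ => e c * e (γ * k) := by
    intro c k
    exact continuous_const.mul (e_cont.comp (continuous_id.mul continuous_const))
  rw [intervalIntegral.integral_finset_sum]
  swap
  · intro m _
    apply Continuous.intervalIntegrable
    exact continuous_finset_sum _ fun n _ => cont (g (n:ℤ)) ((n:ℤ) - m)
  have inner : ∀ m ∈ Finset.Icc A₁ B₁,
      (∫ γ in (0:ℝ)..1, ∑ n ∈ Finset.Icc A B, e (g n) * e (γ * ((n - m : ℤ))))
        = e (g m) := by
    intro m hm
    rw [intervalIntegral.integral_finset_sum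
      (fun n _ => (cont (g (n:ℤ)) ((n:ℤ) - m)).intervalIntegrable _ _)]
    have term : ∀ n ∈ Finset.Icc A B,
        (∫ γ in (0:ℝ)..1, e (g n) * e (γ * ((n - m : ℤ))))
          = if n = m then e (g n) else 0 := by
      intro n _
      rw [intervalIntegral.integral_const_mul]
      rcases eq_or_ne n m with rfl | hnm
      · simp [e_zero]
      · rw [e_integral (n - m) (by omega)]
        simp [hnm]
    rw [Finset.sum_congr rfl term, Finset.sum_ite_eq' (Finset.Icc A B) m (fun n => e (g n)),
      if_pos (hsub hm)]
  rw [Finset.sum_congr rfl inner]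

end Stmt3Aux

open Stmt3Aux in
/-- Enlarging the interval of summation: the sum over a subinterval is controlled by
    log(1+|I|) times the sup over γ ∈ [0,1] of the twisted sum over the full interval. -/
theorem stmt3 :
    ∃ C > 0, ∀ (a b a₁ b₁ : ℝ) (g : ℝ → ℝ),
      a ≤ a₁ → b₁ ≤ b → 1 < b₁ - a₁ →
      ‖∑ n ∈ Finset.Icc ⌈a₁⌉ ⌊b₁⌋, e (g n)‖ ≤
        C * Real.log (1 + (b - a)) *
          ⨆ γ : Set.Icc (0 : ℝ) 1, ‖∑ n ∈ Finset.Icc ⌈a⌉ ⌊b⌋, e (g n + (γ : ℝ) * n)‖ := by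
  refine ⟨6, by norm_num, ?_⟩
  intro a b a₁ b₁ g ha hb hlen
  set A : ℤ := ⌈a⌉ with hA
  set B : ℤ := ⌊b⌋ with hB
  set A₁ : ℤ := ⌈a₁⌉ with hA₁
  set B₁ : ℤ := ⌊b₁⌋ with hB₁
  set S : ℝ → ℂ := fun γ => ∑ n ∈ Finset.Icc A B, e (g n + γ * n) with hS
  set M : ℝ := ⨆ γ : Set.Icc (0 : ℝ) 1, ‖∑ n ∈ Finset.Icc A B, e (g n + (γ : ℝ) * n)‖ with hMdef
  have hsub : Finset.Icc A₁ B₁ ⊆ Finset.Icc A B := by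
    intro m hm
    simp only [Finset.mem_Icc] at hm ⊢
    have h1 : A ≤ A₁ := Int.ceil_le_ceil ha
    have h2 : B₁ ≤ B := Int.floor_le_floor hb
    omega
  have hA₁B₁ : A₁ ≤ B₁ := by
    have h1 : (A₁ : ℝ) < a₁ + 1 := Int.ceil_lt_add_one a₁
    have h2 : (A₁ : ℝ) ≤ b₁ := by linarith
    exact Int.le_floor.mpr h2
  set N : ℝ := ((Finset.Icc A₁ B₁).card : ℝ) with hNdef
  have hcard : ((Finset.Icc A₁ B₁).card : ℤ) = B₁ + 1 - A₁ := by
    rw [Int.card_Icc]; omega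
  have hN1 : 1 ≤ N := by
    rw [hNdef]
    have : (1 : ℤ) ≤ ((Finset.Icc A₁ B₁).card : ℤ) := by omega
    exact_mod_cast this
  have hNle : N ≤ 1 + (b - a) := by
    have h1 : (A₁ : ℝ) ≥ a₁ := Int.le_ceil a₁
    have h2 : (B₁ : ℝ) ≤ b₁ := Int.floor_le b₁
    have h3 : N = (B₁ : ℝ) + 1 - A₁ := by
      rw [hNdef]; exact_mod_cast congrArg (Int.cast : ℤ → ℝ) hcard
    rw [h3]; linarith
  -- continuity facts
  have contS : Continuous S := by
    rw [hS]
    exact continuous_finset_sum _ fun n _ =>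
      e_cont.comp (continuous_const.add (continuous_id.mul continuous_const))
  set K : ℝ → ℂ := fun γ => ∑ m ∈ Finset.Icc A₁ B₁, e (-(γ * m)) with hK
  have contK : Continuous K := by
    rw [hK]
    exact continuous_finset_sum _ fun m _ =>
      e_cont.comp ((continuous_id.mul continuous_const).neg)
  -- sup facts
  have bdd : BddAbove (Set.range fun γ : Set.Icc (0:ℝ) 1 => ‖S γ‖) :=
    (isCompact_range ((contS.comp continuous_subtype_val).norm)).bddAbove
  have hMle : ∀ γ : ℝ, γ ∈ Set.Icc (0:ℝ) 1 → ‖S γ‖ ≤ M :=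
    fun γ hγ => le_ciSup bdd (⟨γ, hγ⟩ : Set.Icc (0:ℝ) 1)
  have hM0 : 0 ≤ M := le_trans (norm_nonneg (S 0)) (hMle 0 ⟨le_refl 0, zero_le_one⟩)
  -- kernel bounds
  have hKN : ∀ γ ∈ Set.Icc (0:ℝ) 1, ‖K γ‖ ≤ N := by
    intro γ _
    calc ‖K γ‖ ≤ ∑ m ∈ Finset.Icc A₁ B₁, ‖e (-(γ * m))‖ := norm_sum_le _ _
      _ = ∑ _m ∈ Finset.Icc A₁ B₁, (1:ℝ) := Finset.sum_congr rfl (fun m _ => norm_e _)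
      _ = N := by rw [Finset.sum_const, nsmul_eq_mul, mul_one]
  have hKmin : ∀ γ : ℝ, 0 < γ → γ < 1 → ‖K γ‖ ≤ (min γ (1-γ))⁻¹ := by
    intro γ h0 h1
    have hz : ‖e (-γ)‖ = 1 := norm_e _
    have hKz : K γ = ∑ m ∈ Finset.Icc A₁ B₁, (e (-γ)) ^ m := by
      rw [hK]
      refine Finset.sum_congr rfl fun m _ => ?_
      rw [← e_zpow]; congr 1; ring
    have hg := geom_bound (e (-γ)) hz A₁ B₁
    have hl := kernel_lower γ h0 h1
    have hm0 : 0 < min γ (1-γ) := lt_min h0 (by linarith)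
    have hnn : 0 ≤ ‖∑ m ∈ Finset.Icc A₁ B₁, (e (-γ)) ^ m‖ := norm_nonneg _
    have h2m : (γ ⊓ (1-γ)) * ‖∑ m ∈ Finset.Icc A₁ B₁, (e (-γ)) ^ m‖ ≤ 1 := by nlinarith
    rw [hKz]
    calc ‖∑ m ∈ Finset.Icc A₁ B₁, (e (-γ)) ^ m‖
        = (γ ⊓ (1-γ))⁻¹ * ((γ ⊓ (1-γ)) * ‖∑ m ∈ Finset.Icc A₁ B₁, (e (-γ)) ^ m‖) := by
          field_simp
      _ ≤ (γ ⊓ (1-γ))⁻¹ * 1 := mul_le_mul_of_nonneg_left h2m (by positivity)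
      _ = (γ ⊓ (1-γ))⁻¹ := mul_one _
  -- the main identity
  have identity : ∫ γ in (0:ℝ)..1, K γ * S γ = ∑ n ∈ Finset.Icc A₁ B₁, e (g n) :=
    ortho A B A₁ B₁ hsub g
  have est := int_est (fun γ => ‖K γ‖) contK.norm N hN1 hKN hKmin
  -- log comparison
  set L : ℝ := Real.log (1 + (b - a)) with hL
  have hblen : 2 ≤ 1 + (b - a) := by linarith
  have hL2 : Real.log 2 ≤ L := Real.log_le_log (by norm_num) hblen
  have hlog2 : (0.6931471803 : ℝ) < Real.log 2 := Real.log_two_gt_d9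
  have hlogNL : Real.log N ≤ L := Real.log_le_log (by linarith) hNle
  have hfinal : 2 + 2 * Real.log N ≤ 6 * L := by linarith
  calc ‖∑ n ∈ Finset.Icc A₁ B₁, e (g n)‖ = ‖∫ γ in (0:ℝ)..1, K γ * S γ‖ := by rw [identity]
    _ ≤ ∫ γ in (0:ℝ)..1, ‖K γ * S γ‖ :=
        intervalIntegral.norm_integral_le_integral_norm zero_le_one
    _ ≤ ∫ γ in (0:ℝ)..1, ‖K γ‖ * M := by
        apply intervalIntegral.integral_mono_on zero_le_one
          ((contK.mul contS).norm.intervalIntegrable _ _)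
          ((contK.norm.mul continuous_const).intervalIntegrable _ _)
        intro γ hγ
        show ‖K γ * S γ‖ ≤ ‖K γ‖ * M
        rw [norm_mul]
        exact mul_le_mul_of_nonneg_left (hMle γ hγ) (norm_nonneg _)
    _ = (∫ γ in (0:ℝ)..1, ‖K γ‖) * M := intervalIntegral.integral_mul_const M _
    _ ≤ (2 + 2 * Real.log N) * M := mul_le_mul_of_nonneg_right est hM0
    _ ≤ 6 * L * M := mul_le_mul_of_nonneg_right hfinal hM0
end

section
/- For any nonzero real z and real N ≥ 1, the integral I(z) = ∫₀^{N^{1/k}} δ x^{δ-1} e(z x^k) dx satisfies |I(z)| ≪ min(N^{δ/k}, |z|^{-δ/k}), with implied constant depending only on δ and k. -/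
open MeasureTheory Real Set intervalIntegral

lemma norm_e (t : ℝ) : ‖e t‖ = 1 := by
  have h : (2 * (Real.pi : ℂ) * Complex.I * t) = ((2 * Real.pi * t : ℝ) : ℂ) * Complex.I := by
    push_cast; ring
  rw [e, h, Complex.norm_exp_ofReal_mul_I]

lemma norm_f (k : ℕ) (δ z x : ℝ) (hδ : 0 ≤ δ) (hx : 0 ≤ x) :
    ‖((δ * x ^ (δ - 1) : ℝ) : ℂ) * e (z * x ^ k)‖ = δ * x ^ (δ - 1) := by
  rw [norm_mul, norm_e, mul_one, Complex.norm_real, Real.norm_eq_abs, abs_of_nonneg]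
  exact mul_nonneg hδ (Real.rpow_nonneg hx _)

lemma intable (k : ℕ) (δ z : ℝ) (hδ0 : 0 < δ) (hδ1 : δ < 1) {a b : ℝ}
    (ha : 0 ≤ a) (hb : 0 ≤ b) :
    IntervalIntegrable (fun x => ((δ * x ^ (δ - 1) : ℝ) : ℂ) * e (z * x ^ k)) volume a b := by
  have hg : IntervalIntegrable (fun x : ℝ => δ * x ^ (δ - 1)) volume a b :=
    (intervalIntegral.intervalIntegrable_rpow' (by linarith)).const_mul δ
  refine hg.mono_fun ?_ ?_
  · apply Measurable.aestronglyMeasurable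
    have m1 : Measurable fun x : ℝ => ((δ * x ^ (δ - 1) : ℝ) : ℂ) :=
      Complex.measurable_ofReal.comp ((by measurability : Measurable fun x : ℝ => x ^ (δ-1)).const_mul δ)
    have m2 : Measurable fun x : ℝ => e (z * x ^ k) := by
      unfold e
      exact Complex.measurable_exp.comp
        ((Complex.measurable_ofReal.comp ((measurable_id.pow_const k).const_mul z)).const_mul
          (2 * Real.pi * Complex.I))
    exact m1.mul m2
  · filter_upwards [ae_restrict_mem measurableSet_uIoc] with x hx
    have hx0 : 0 ≤ x := le_trans (le_min ha hb) (le_of_lt hx.1)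
    rw [norm_f k δ z x hδ0.le hx0, Real.norm_eq_abs,
      abs_of_nonneg (mul_nonneg hδ0.le (Real.rpow_nonneg hx0 _))]

lemma trivial_bound (k : ℕ) (δ z : ℝ) (hδ0 : 0 < δ) (hδ1 : δ < 1) {b : ℝ} (hb : 0 ≤ b) :
    ‖∫ x in (0:ℝ)..b, ((δ * x ^ (δ - 1) : ℝ) : ℂ) * e (z * x ^ k)‖ ≤ b ^ δ := by
  calc ‖∫ x in (0:ℝ)..b, ((δ * x ^ (δ - 1) : ℝ) : ℂ) * e (z * x ^ k)‖
      ≤ ∫ x in (0:ℝ)..b, ‖((δ * x ^ (δ - 1) : ℝ) : ℂ) * e (z * x ^ k)‖ :=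
        intervalIntegral.norm_integral_le_integral_norm hb
    _ = ∫ x in (0:ℝ)..b, δ * x ^ (δ - 1) := by
        apply intervalIntegral.integral_congr
        intro x hx
        have hx0 : 0 ≤ x := by
          rcases hx with ⟨h1, _⟩
          simpa [min_eq_left hb] using h1
        exact norm_f k δ z x hδ0.le hx0
    _ = δ * ∫ x in (0:ℝ)..b, x ^ (δ - 1) := intervalIntegral.integral_const_mul _ _
    _ = b ^ δ := by
        rw [integral_rpow (Or.inl (by linarith))]
        rw [Real.zero_rpow (by linarith : δ - 1 + 1 ≠ 0)]
        rw [show δ - 1 + 1 = δ by ring, sub_zero]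
        field_simp


lemma osc_bound (k : ℕ) (hk : 1 ≤ k) (δ z : ℝ) (hδ0 : 0 < δ) (hδ1 : δ < 1)
    (hz : z ≠ 0) {S T : ℝ} (hS : 0 < S) (hST : S ≤ T) :
    ‖∫ x in S..T, ((δ * x ^ (δ - 1) : ℝ) : ℂ) * e (z * x ^ k)‖ ≤
      3 * δ / (2 * Real.pi * k * |z|) * S ^ (δ - k) := by
  have hπ : (0:ℝ) < Real.pi := Real.pi_pos
  have hk0 : (0:ℝ) < k := by exact_mod_cast hk
  have hzpos : 0 < |z| := abs_pos.mpr hz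
  have hδk : δ - (k:ℝ) < 0 := by
    have : (1:ℝ) ≤ k := by exact_mod_cast hk
    linarith
  set c : ℂ := 2 * Real.pi * Complex.I * z with hc_def
  have hc : c ≠ 0 := by
    simp only [hc_def]
    apply mul_ne_zero
    apply mul_ne_zero
    · norm_num [Real.pi_ne_zero]
    · exact Complex.I_ne_zero
    · exact_mod_cast hz
  set d : ℂ := c * k with hd_def
  have hd : d ≠ 0 := mul_ne_zero hc (by exact_mod_cast Nat.cast_ne_zero.mpr (by omega))
  have hnd : ‖d‖ = 2 * Real.pi * |z| * k := by
    simp only [hd_def, hc_def, norm_mul, Complex.norm_I, Complex.norm_two,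
      Complex.norm_real, Real.norm_eq_abs, Complex.norm_natCast]
    rw [abs_of_pos hπ]
    ring
  set u : ℝ → ℂ := fun x => ((δ * x ^ (δ - (k:ℝ)) : ℝ) : ℂ) / d with hu_def
  set u' : ℝ → ℂ := fun x => (((δ - (k:ℝ)) * δ * x ^ (δ - (k:ℝ) - 1) : ℝ) : ℂ) / d with hu'_def
  set v : ℝ → ℂ := fun x => e (z * x ^ k) with hv_def
  set v' : ℝ → ℂ := fun x => d * ((x ^ (k - 1) : ℝ) : ℂ) * v x with hv'_def
  have hveq : ∀ x : ℝ, v x = Complex.exp (c * ((x ^ k : ℝ) : ℂ)) := by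
    intro x
    simp only [hv_def, e, hc_def]
    congr 1
    push_cast
    ring
  have hposIcc : ∀ x ∈ uIcc S T, 0 < x := by
    intro x hx
    rw [uIcc_of_le hST] at hx
    exact lt_of_lt_of_le hS hx.1
  have hu : ∀ x ∈ uIcc S T, HasDerivAt u (u' x) x := by
    intro x hx
    have hx0 := hposIcc x hx
    have h1 : HasDerivAt (fun y : ℝ => y ^ (δ - (k:ℝ))) ((δ - (k:ℝ)) * x ^ (δ - (k:ℝ) - 1)) x :=
      Real.hasDerivAt_rpow_const (Or.inl hx0.ne')
    have h2 := ((h1.const_mul δ).ofReal_comp).div_const d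
    convert h2 using 1
    · rfl
    simp only [hu'_def]
    push_cast
    ring
  have hfun : (fun y : ℝ => Complex.exp (c * ((y ^ k : ℝ) : ℂ))) = v := by
    funext y; rw [hveq y]
  have hv : ∀ x ∈ uIcc S T, HasDerivAt v (v' x) x := by
    intro x _
    have h0 : HasDerivAt (fun y : ℝ => ((y ^ k : ℝ) : ℂ)) (((k : ℝ) * x ^ (k - 1) : ℝ) : ℂ) x :=
      (hasDerivAt_pow k x).ofReal_comp
    have h1 := ((h0.const_mul c).cexp)
    rw [hfun] at h1
    convert h1 using 1
    simp only [hv'_def, hd_def]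
    rw [hveq x]
    push_cast
    ring
  have hu'int : IntervalIntegrable u' volume S T := by
    apply ContinuousOn.intervalIntegrable
    apply ContinuousOn.div_const
    apply Complex.continuous_ofReal.comp_continuousOn
    apply ContinuousOn.mul continuousOn_const
    intro x hx
    exact (Real.continuousAt_rpow_const x _ (Or.inl (hposIcc x hx).ne')).continuousWithinAt
  have hvcont : Continuous v := by
    have : Continuous (fun y : ℝ => Complex.exp (c * ((y ^ k : ℝ) : ℂ))) :=
      Complex.continuous_exp.comp
        (continuous_const.mul (Complex.continuous_ofReal.comp (continuous_pow k)))
    rwa [hfun] at this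
  have hv'int : IntervalIntegrable v' volume S T := by
    apply Continuous.intervalIntegrable
    exact (continuous_const.mul (Complex.continuous_ofReal.comp (continuous_pow (k-1)))).mul hvcont
  have ibp := intervalIntegral.integral_mul_deriv_eq_deriv_mul hu hv hu'int hv'int
  have heq : ∫ x in S..T, ((δ * x ^ (δ - 1) : ℝ) : ℂ) * e (z * x ^ k)
      = ∫ x in S..T, u x * v' x := by
    apply intervalIntegral.integral_congr
    intro x hx
    have hx0 := hposIcc x hx
    have hpow : ((x : ℝ) ^ (k - 1) : ℝ) = x ^ ((k:ℝ) - 1) := by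
      rw [← Real.rpow_natCast x (k-1), Nat.cast_sub hk, Nat.cast_one]
    have hsplit : x ^ (δ - 1) = x ^ (δ - (k:ℝ)) * x ^ ((k:ℝ) - 1) := by
      rw [← Real.rpow_add hx0]; ring_nf
    simp only [hu_def, hv'_def, hv_def]
    rw [hsplit]
    push_cast [hpow]
    field_simp
  rw [heq, ibp]
  have hnu : ∀ x : ℝ, 0 < x → ‖u x‖ = δ * x ^ (δ - (k:ℝ)) / (2 * Real.pi * |z| * k) := by
    intro x hx0
    simp only [hu_def]
    rw [norm_div, Complex.norm_real, Real.norm_eq_abs, hnd,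
      abs_of_nonneg (mul_nonneg hδ0.le (Real.rpow_nonneg hx0.le _))]
  have hnv : ∀ x : ℝ, ‖v x‖ = 1 := fun x => norm_e _
  have hT0 : 0 < T := lt_of_lt_of_le hS hST
  have hTS : T ^ (δ - (k:ℝ)) ≤ S ^ (δ - (k:ℝ)) :=
    Real.rpow_le_rpow_of_nonpos hS hST hδk.le
  have hterm : ∀ x : ℝ, 0 < x →
      ‖u x * v x‖ ≤ δ * x ^ (δ - (k:ℝ)) / (2 * Real.pi * |z| * k) := by
    intro x hx0
    rw [norm_mul, hnv, mul_one, hnu x hx0]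
  have hbound2 : ‖∫ x in S..T, u' x * v x‖ ≤
      δ / (2 * Real.pi * |z| * k) * S ^ (δ - (k:ℝ)) := by
    calc ‖∫ x in S..T, u' x * v x‖ ≤ ∫ x in S..T, ‖u' x * v x‖ :=
          intervalIntegral.norm_integral_le_integral_norm hST
      _ = ∫ x in S..T, ((k:ℝ) - δ) * δ / (2 * Real.pi * |z| * k) * x ^ (δ - (k:ℝ) - 1) := by
          apply intervalIntegral.integral_congr
          intro x hx
          have hx0 := hposIcc x hx
          show ‖u' x * v x‖ = ((k:ℝ) - δ) * δ / (2 * Real.pi * |z| * ↑k) * x ^ (δ - (k:ℝ) - 1)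
          rw [norm_mul, hnv, mul_one]
          simp only [hu'_def]
          rw [norm_div, Complex.norm_real, Real.norm_eq_abs, hnd, abs_mul, abs_mul,
            abs_of_nonneg (Real.rpow_nonneg hx0.le _), abs_of_neg hδk, abs_of_pos hδ0]
          ring
      _ = ((k:ℝ) - δ) * δ / (2 * Real.pi * |z| * k) *
            ((T ^ (δ - (k:ℝ)) - S ^ (δ - (k:ℝ))) / (δ - (k:ℝ))) := by
          rw [intervalIntegral.integral_const_mul, integral_rpow]
          · norm_num
          · right
            constructor
            · intro h; linarith
            · rw [uIcc_of_le hST]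
              intro h
              exact absurd h.1 (not_le_of_gt hS)
      _ = δ / (2 * Real.pi * |z| * k) * (S ^ (δ - (k:ℝ)) - T ^ (δ - (k:ℝ))) := by
          have hne : δ - (k:ℝ) ≠ 0 := hδk.ne
          field_simp
          ring
      _ ≤ δ / (2 * Real.pi * |z| * k) * S ^ (δ - (k:ℝ)) := by
          apply mul_le_mul_of_nonneg_left _ (by positivity)
          have : 0 ≤ T ^ (δ - (k:ℝ)) := Real.rpow_nonneg hT0.le _
          linarith
  calc ‖u T * v T - u S * v S - ∫ x in S..T, u' x * v x‖
      ≤ ‖u T * v T - u S * v S‖ + ‖∫ x in S..T, u' x * v x‖ := norm_sub_le _ _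
    _ ≤ ‖u T * v T‖ + ‖u S * v S‖ + ‖∫ x in S..T, u' x * v x‖ := by
        have := norm_sub_le (u T * v T) (u S * v S)
        linarith
    _ ≤ δ * T ^ (δ - (k:ℝ)) / (2 * Real.pi * |z| * k)
        + δ * S ^ (δ - (k:ℝ)) / (2 * Real.pi * |z| * k)
        + δ / (2 * Real.pi * |z| * k) * S ^ (δ - (k:ℝ)) := by
        have h1 := hterm T hT0
        have h2 := hterm S hS
        linarith [hbound2]
    _ ≤ 3 * δ / (2 * Real.pi * k * |z|) * S ^ (δ - (k:ℝ)) := by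
        have h1 : δ * T ^ (δ - (k:ℝ)) / (2 * Real.pi * |z| * k) ≤
            δ * S ^ (δ - (k:ℝ)) / (2 * Real.pi * |z| * k) := by
          apply div_le_div_of_nonneg_right ?_ (by positivity)
          exact mul_le_mul_of_nonneg_left hTS hδ0.le
        have heqq : 3 * δ / (2 * Real.pi * k * |z|) * S ^ (δ - (k:ℝ)) =
            δ * S ^ (δ - (k:ℝ)) / (2 * Real.pi * |z| * k) * 3 := by ring
        have hbc : δ / (2 * Real.pi * |z| * k) * S ^ (δ - (k:ℝ)) =
            δ * S ^ (δ - (k:ℝ)) / (2 * Real.pi * |z| * k) := by ring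
        rw [heqq]
        linarith

/-- Bound for the singular-integral kernel I(z) = ∫₀^{N^{1/k}} δ x^{δ-1} e(z x^k) dx. -/
theorem stmt5 (k : ℕ) (hk : 1 ≤ k) (δ : ℝ) (hδ0 : 0 < δ) (hδ1 : δ < 1) :
    ∃ C > 0, ∀ (z : ℝ), z ≠ 0 → ∀ (N : ℝ), 1 ≤ N →
      ‖∫ x in (0 : ℝ)..(N ^ ((1 : ℝ) / k)), ((δ * x ^ (δ - 1) : ℝ) : ℂ) * e (z * x ^ k)‖ ≤
        C * min (N ^ (δ / k)) (|z| ^ (-(δ / k))) := by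
  refine ⟨2, by norm_num, ?_⟩
  intro z hz N hN
  have hπ : (0:ℝ) < Real.pi := Real.pi_pos
  have hπ3 : (3:ℝ) < Real.pi := Real.pi_gt_three
  have hk0 : (0:ℝ) < k := by exact_mod_cast hk
  have hN0 : (0:ℝ) < N := lt_of_lt_of_le one_pos hN
  have hzpos : 0 < |z| := abs_pos.mpr hz
  set T : ℝ := N ^ ((1:ℝ)/k) with hT_def
  have hT0 : 0 < T := Real.rpow_pos_of_pos hN0 _
  have hTδ : T ^ δ = N ^ (δ / k) := by
    rw [hT_def, ← Real.rpow_mul hN0.le]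
    congr 1
    field_simp
  set S : ℝ := |z| ^ (-(1:ℝ)/k) with hS_def
  have hS0 : 0 < S := Real.rpow_pos_of_pos hzpos _
  have hSδ : S ^ δ = |z| ^ (-(δ / k)) := by
    rw [hS_def, ← Real.rpow_mul hzpos.le]
    congr 1
    field_simp
  -- bound A (trivial)
  have boundA : ‖∫ x in (0:ℝ)..T, ((δ * x ^ (δ - 1) : ℝ) : ℂ) * e (z * x ^ k)‖ ≤ N ^ (δ / k) := by
    rw [← hTδ]
    exact trivial_bound k δ z hδ0 hδ1 hT0.le
  -- bound B
  have boundB : ‖∫ x in (0:ℝ)..T, ((δ * x ^ (δ - 1) : ℝ) : ℂ) * e (z * x ^ k)‖ ≤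
      2 * (|z| ^ (-(δ / k))) := by
    rcases le_total T S with h | h
    · -- T ≤ S : trivial bound suffices
      have h1 : T ^ δ ≤ S ^ δ := Real.rpow_le_rpow hT0.le h hδ0.le
      have := trivial_bound k δ z hδ0 hδ1 hT0.le
      rw [← hSδ]
      have hSd : 0 < S ^ δ := Real.rpow_pos_of_pos hS0 _
      linarith
    · -- S ≤ T : split the integral
      have hsplit : ∫ x in (0:ℝ)..T, ((δ * x ^ (δ - 1) : ℝ) : ℂ) * e (z * x ^ k)
          = (∫ x in (0:ℝ)..S, ((δ * x ^ (δ - 1) : ℝ) : ℂ) * e (z * x ^ k))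
            + ∫ x in S..T, ((δ * x ^ (δ - 1) : ℝ) : ℂ) * e (z * x ^ k) :=
        (intervalIntegral.integral_add_adjacent_intervals
          (intable k δ z hδ0 hδ1 le_rfl hS0.le)
          (intable k δ z hδ0 hδ1 hS0.le hT0.le)).symm
      rw [hsplit]
      have h1 : ‖∫ x in (0:ℝ)..S, ((δ * x ^ (δ - 1) : ℝ) : ℂ) * e (z * x ^ k)‖ ≤
          |z| ^ (-(δ / k)) := by
        rw [← hSδ]
        exact trivial_bound k δ z hδ0 hδ1 hS0.le
      have h2 := osc_bound k hk δ z hδ0 hδ1 hz hS0 h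
      -- simplify osc bound
      have hSδk : S ^ (δ - (k:ℝ)) = |z| * |z| ^ (-(δ / k)) := by
        rw [hS_def, ← Real.rpow_mul hzpos.le]
        have hexp : (-(1:ℝ)/k) * (δ - (k:ℝ)) = 1 + (-(δ/k)) := by
          field_simp
          ring
        rw [hexp, Real.rpow_add hzpos, Real.rpow_one]
      have h3 : 3 * δ / (2 * Real.pi * k * |z|) * S ^ (δ - (k:ℝ)) ≤ |z| ^ (-(δ / k)) := by
        rw [hSδk]
        have hq : 3 * δ / (2 * Real.pi * k * |z|) * (|z| * |z| ^ (-(δ / k)))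
            = (3 * δ / (2 * Real.pi * k)) * |z| ^ (-(δ / k)) := by
          field_simp
        rw [hq]
        have hzp : 0 < |z| ^ (-(δ / k)) := Real.rpow_pos_of_pos hzpos _
        have hcoef : 3 * δ / (2 * Real.pi * k) ≤ 1 := by
          rw [div_le_one (by positivity)]
          have h1k : (1:ℝ) ≤ k := by exact_mod_cast hk
          nlinarith
        nlinarith
      calc ‖(∫ x in (0:ℝ)..S, ((δ * x ^ (δ - 1) : ℝ) : ℂ) * e (z * x ^ k))
            + ∫ x in S..T, ((δ * x ^ (δ - 1) : ℝ) : ℂ) * e (z * x ^ k)‖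
          ≤ ‖∫ x in (0:ℝ)..S, ((δ * x ^ (δ - 1) : ℝ) : ℂ) * e (z * x ^ k)‖
            + ‖∫ x in S..T, ((δ * x ^ (δ - 1) : ℝ) : ℂ) * e (z * x ^ k)‖ := norm_add_le _ _
        _ ≤ 2 * (|z| ^ (-(δ / k))) := by linarith
  rcases le_total (N ^ (δ / k)) (|z| ^ (-(δ / k))) with h | h
  · rw [min_eq_left h]
    have hp : 0 ≤ N ^ (δ / k) := (Real.rpow_pos_of_pos hN0 _).le
    linarith
  · rw [min_eq_right h]
    exact boundB
end

section
/- Let u, v ≥ 1 be real numbers and n > v an integer. Then Λ(n) = ∑_{ab = n, a ≤ u} μ(a) log b − ∑_{ab = n, a > v, b > u} Λ(a) (∑_{d | b, d ≤ u} μ(d)) − ∑_{abc = n, b ≤ u, a ≤ v} μ(b) Λ(a). -/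
open ArithmeticFunction Finset
open scoped ArithmeticFunction.zeta ArithmeticFunction.Moebius

noncomputable def Mle (u : ℝ) : ArithmeticFunction ℝ :=
  ⟨fun a => if (a : ℝ) ≤ u then (moebius a : ℝ) else 0, by simp⟩

noncomputable def Lgt (v : ℝ) : ArithmeticFunction ℝ :=
  ⟨fun a => if v < (a : ℝ) then Λ a else 0, by simp⟩

noncomputable def Lle (v : ℝ) : ArithmeticFunction ℝ :=
  ⟨fun a => if (a : ℝ) ≤ v then Λ a else 0, by simp⟩

noncomputable def Gg (u : ℝ) : ArithmeticFunction ℝ :=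
  ⟨fun b => if u < (b : ℝ) then (Mle u * ζ) b else 0, by simp⟩

lemma Mle_apply (u : ℝ) (a : ℕ) : Mle u a = if (a : ℝ) ≤ u then (moebius a : ℝ) else 0 := rfl
lemma Lgt_apply (v : ℝ) (a : ℕ) : Lgt v a = if v < (a : ℝ) then (Λ a : ℝ) else 0 := rfl
lemma Lle_apply (v : ℝ) (a : ℕ) : Lle v a = if (a : ℝ) ≤ v then (Λ a : ℝ) else 0 := rfl
lemma Gg_apply (u : ℝ) (b : ℕ) : Gg u b = if u < (b : ℝ) then (Mle u * ζ) b else 0 := rfl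

lemma Lgt_add_Lle (v : ℝ) : Lgt v + Lle v = Λ := by
  ext a
  rw [ArithmeticFunction.add_apply, Lgt_apply, Lle_apply]
  rcases le_or_gt (a : ℝ) v with h | h
  · rw [if_neg (not_lt.2 h), if_pos h, zero_add]
  · rw [if_pos h, if_neg (not_le.2 h), add_zero]

lemma Mle_zeta_apply (u : ℝ) (b : ℕ) :
    (Mle u * ζ) b = ∑ d ∈ b.divisors.filter (fun d : ℕ => (d : ℝ) ≤ u), (moebius d : ℝ) := by
  rw [coe_mul_zeta_apply, sum_filter]
  exact sum_congr rfl fun d _ => rfl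

lemma Gg_add_one (u : ℝ) (hu : 1 ≤ u) : Gg u + 1 = Mle u * ζ := by
  ext b
  rw [ArithmeticFunction.add_apply, Gg_apply, one_apply]
  rcases lt_or_ge u (b : ℝ) with h | h
  · have hb1 : b ≠ 1 := by
      rintro rfl
      exact absurd h (not_lt.2 (by exact_mod_cast hu))
    rw [if_pos h, if_neg hb1, add_zero]
  · rw [if_neg (not_lt.2 h)]
    rcases eq_or_ne b 0 with rfl | hb0
    · simp
    rcases eq_or_ne b 1 with rfl | hb1
    · rw [if_pos rfl, zero_add, Mle_zeta_apply]
      have : (1 : ℕ).divisors.filter (fun d : ℕ => (d : ℝ) ≤ u) = {1} := by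
        rw [Nat.divisors_one, filter_eq_self.2]
        intro x hx
        rw [mem_singleton] at hx
        subst hx
        exact_mod_cast hu
      rw [this, sum_singleton]
      simp
    · rw [if_neg hb1, zero_add, eq_comm, Mle_zeta_apply]
      have hfil : b.divisors.filter (fun d : ℕ => (d : ℝ) ≤ u) = b.divisors := by
        apply filter_eq_self.2
        intro d hd
        have hdb : d ≤ b := Nat.le_of_dvd (Nat.pos_of_ne_zero hb0) (Nat.mem_divisors.1 hd).1
        exact le_trans (by exact_mod_cast hdb) h
      rw [hfil, eq_comm]
      have h2 : ((μ : ArithmeticFunction ℝ) * ζ) b = (1 : ArithmeticFunction ℝ) b := by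
        rw [coe_moebius_mul_coe_zeta]
      rw [coe_mul_zeta_apply, one_apply, if_neg hb1] at h2
      rw [← h2]
      exact sum_congr rfl fun d _ => by rw [intCoe_apply]

/-- Vaughan's identity. -/
theorem stmt6 (u v : ℝ) (hu : 1 ≤ u) (hv : 1 ≤ v) (n : ℕ) (hn : v < n) :
    (Λ n : ℝ) =
      (∑ a ∈ n.divisors.filter (fun a : ℕ => (a : ℝ) ≤ u),
          (moebius a : ℝ) * Real.log ((n : ℝ) / a))
      - (∑ p ∈ n.divisorsAntidiagonal.filter
            (fun p : ℕ × ℕ => v < (p.1 : ℝ) ∧ u < (p.2 : ℝ)),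
          (Λ p.1 : ℝ) *
            (∑ d ∈ p.2.divisors.filter (fun d : ℕ => (d : ℝ) ≤ u), (moebius d : ℝ)))
      - (∑ p ∈ n.divisorsAntidiagonal,
          ∑ q ∈ p.1.divisorsAntidiagonal.filter
              (fun q : ℕ × ℕ => (q.1 : ℝ) ≤ v ∧ (q.2 : ℝ) ≤ u),
            (moebius q.2 : ℝ) * (Λ q.1 : ℝ)) := by
  have hn1 : (1 : ℝ) < (n : ℕ) := lt_of_le_of_lt hv hn
  have hn0 : n ≠ 0 := by
    rintro rfl
    norm_num at hn1
  -- S1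
  have hS1 : (∑ a ∈ n.divisors.filter (fun a : ℕ => (a : ℝ) ≤ u),
      (moebius a : ℝ) * Real.log ((n : ℝ) / a)) = (Mle u * ArithmeticFunction.log) n := by
    rw [mul_apply, Nat.sum_divisorsAntidiagonal
      (fun a b => (Mle u) a * ArithmeticFunction.log b), sum_filter]
    apply sum_congr rfl
    intro a ha
    rw [Nat.mem_divisors] at ha
    have ha0 : a ≠ 0 := by rintro rfl; exact ha.2 (zero_dvd_iff.1 ha.1)
    rw [Mle_apply, ite_mul, zero_mul, log_apply,
      Nat.cast_div ha.1 (by exact_mod_cast ha0)]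
  -- S2
  have hS2 : (∑ p ∈ n.divisorsAntidiagonal.filter
      (fun p : ℕ × ℕ => v < (p.1 : ℝ) ∧ u < (p.2 : ℝ)),
      (Λ p.1 : ℝ) * (∑ d ∈ p.2.divisors.filter (fun d : ℕ => (d : ℝ) ≤ u), (moebius d : ℝ)))
      = (Lgt v * Gg u) n := by
    rw [mul_apply, sum_filter]
    apply sum_congr rfl
    intro p hp
    rw [Lgt_apply, Gg_apply, Mle_zeta_apply]
    by_cases h1 : v < (p.1 : ℝ) <;> by_cases h2 : u < (p.2 : ℝ) <;> simp [h1, h2]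
  -- S3
  have hS3 : (∑ p ∈ n.divisorsAntidiagonal,
      ∑ q ∈ p.1.divisorsAntidiagonal.filter
        (fun q : ℕ × ℕ => (q.1 : ℝ) ≤ v ∧ (q.2 : ℝ) ≤ u),
        (moebius q.2 : ℝ) * (Λ q.1 : ℝ)) = (Lle v * Mle u * ζ) n := by
    rw [mul_apply]
    apply sum_congr rfl
    intro p hp
    have hp2 : p.2 ≠ 0 := by
      rcases Nat.mem_divisorsAntidiagonal.1 hp with ⟨h1, h2⟩
      intro h0
      rw [h0, mul_zero] at h1
      exact h2 h1.symm
    have hz : ((ζ : ArithmeticFunction ℝ)) p.2 = 1 := by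
      rw [natCoe_apply, zeta_apply_ne hp2, Nat.cast_one]
    rw [hz, mul_one, mul_apply, sum_filter]
    apply sum_congr rfl
    intro q hq
    rw [Lle_apply, Mle_apply]
    by_cases h1 : (q.1 : ℝ) ≤ v <;> by_cases h2 : (q.2 : ℝ) ≤ u <;>
      simp [h1, h2, mul_comm]
  rw [hS1, hS2, hS3]
  have hLn : Lgt v n = (Λ n : ℝ) := by rw [Lgt_apply, if_pos hn]
  have key : Lgt v * Gg u + Lgt v + Lle v * Mle u * ζ = Mle u * ArithmeticFunction.log := by
    have h1 : Lgt v * Gg u + Lgt v = Lgt v * (Mle u * ζ) := by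
      rw [← Gg_add_one u hu, mul_add, mul_one]
    rw [h1, ← mul_assoc, ← add_mul, ← add_mul, Lgt_add_Lle, mul_comm Λ (Mle u), mul_assoc,
      vonMangoldt_mul_zeta]
  have key' : (Lgt v * Gg u) n + Lgt v n + (Lle v * Mle u * ζ) n
      = (Mle u * ArithmeticFunction.log) n := by
    rw [← ArithmeticFunction.add_apply, ← ArithmeticFunction.add_apply, key]
  rw [hLn] at key'
  linarith
end

section
/- For k ≥ 3, the function A(ℓ) = (ℓ-k)/(2ℓ(ℓ-1)(ℓ+1)) over integers ℓ ≥ k+1 attains its maximum at ℓ = ⌊3k/2⌋. -/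
set_option maxHeartbeats 1000000


/-- A(ℓ) = (ℓ-k)/(2ℓ(ℓ-1)(ℓ+1)) is maximized over integers ℓ ≥ k+1 at ℓ = ⌊3k/2⌋. -/
theorem stmt8 (k : ℕ) (hk : 3 ≤ k) :
    ∀ ℓ : ℕ, k + 1 ≤ ℓ →
      ((ℓ : ℝ) - k) / (2 * (ℓ : ℝ) * ((ℓ : ℝ) - 1) * ((ℓ : ℝ) + 1)) ≤
      (((3 * k / 2 : ℕ) : ℝ) - k) /
        (2 * ((3 * k / 2 : ℕ) : ℝ) * (((3 * k / 2 : ℕ) : ℝ) - 1) * (((3 * k / 2 : ℕ) : ℝ) + 1)) := by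
  intro ℓ hℓ
  set m : ℕ := 3 * k / 2 with hm
  have hmk : m = k + k / 2 := by omega
  have ht1 : 1 ≤ k / 2 := by omega
  have h3t : 3 * (k / 2) ≤ m := by omega
  have h3t' : m ≤ 3 * (k / 2) + 1 := by omega
  have hm4 : 4 ≤ m := by omega
  have hℓ4 : 4 ≤ ℓ := by omega
  set L : ℝ := (ℓ : ℝ) with hLdef
  set M : ℝ := (m : ℝ) with hMdef
  set T : ℝ := ((k / 2 : ℕ) : ℝ) with hTdef
  have hL : (4:ℝ) ≤ L := by rw [hLdef]; exact_mod_cast hℓ4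
  have hM : (4:ℝ) ≤ M := by rw [hMdef]; exact_mod_cast hm4
  have hLK : (k:ℝ) + 1 ≤ L := by rw [hLdef]; exact_mod_cast hℓ
  have hMK : M = (k:ℝ) + T := by rw [hMdef, hTdef, hmk]; push_cast; ring
  have hT : (1:ℝ) ≤ T := by rw [hTdef]; exact_mod_cast ht1
  have hT0 : (0:ℝ) ≤ T := by linarith
  have h3tR : 3 * T ≤ M := by
    rw [hMdef, hTdef]; exact_mod_cast h3t
  have h3tR' : M ≤ 3 * T + 1 := by
    rw [hMdef, hTdef]; exact_mod_cast h3t'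
  have hM0 : (0:ℝ) ≤ M := by linarith
  have hdL : 0 < 2 * L * (L - 1) * (L + 1) :=
    mul_pos (mul_pos (by linarith) (by linarith)) (by linarith)
  have hdM : 0 < 2 * M * (M - 1) * (M + 1) :=
    mul_pos (mul_pos (by linarith) (by linarith)) (by linarith)
  rw [div_le_div_iff₀ hdL hdM]
  rcases lt_trichotomy ℓ m with h | h | h
  · -- ℓ ≤ m - 1
    have hLM : L ≤ M - 1 := by
      have : (ℓ:ℝ) + 1 ≤ (m:ℝ) := by exact_mod_cast h
      linarith
    have hd : (0:ℝ) ≤ M - 1 - L := by linarith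
    have hQ : T * (L^2 + M*L + M^2 - 1) - (M^3 - M) ≤ 0 := by
      nlinarith [mul_nonneg (mul_nonneg hT0 hd) (by linarith : (0:ℝ) ≤ M - 1 + L),
        mul_nonneg (mul_nonneg hT0 hM0) hd,
        mul_nonneg (mul_nonneg hM0 (by linarith : (0:ℝ) ≤ M - 1))
          (by linarith : (0:ℝ) ≤ M + 1 - 3*T)]
    have key : 0 ≤ (M - L) * (-(T * (L^2 + M*L + M^2 - 1) - (M^3 - M))) :=
      mul_nonneg (by linarith) (by linarith)
    nlinarith [key]
  · have hEq : L = M := by rw [hLdef, hMdef, h]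
    rw [hEq]
  · -- ℓ ≥ m + 1
    have hLM : M + 1 ≤ L := by
      have : (m:ℝ) + 1 ≤ (ℓ:ℝ) := by exact_mod_cast h
      linarith
    have hd : (0:ℝ) ≤ L - M - 1 := by linarith
    have hQ : 0 ≤ T * (L^2 + M*L + M^2 - 1) - (M^3 - M) := by
      nlinarith [mul_nonneg (mul_nonneg hT0 hd) (by linarith : (0:ℝ) ≤ L + M + 1),
        mul_nonneg (mul_nonneg hT0 hM0) hd,
        mul_nonneg (mul_nonneg hM0 (by linarith : (0:ℝ) ≤ M + 1))
          (by linarith : (0:ℝ) ≤ 3*T + 1 - M)]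
    have key : 0 ≤ (L - M) * (T * (L^2 + M*L + M^2 - 1) - (M^3 - M)) :=
      mul_nonneg (by linarith) hQ
    nlinarith [key]
end

section
/- Uniformly for 2 < t ≤ N^{1/k} and nonzero real β, the integral Φ(β,t) = ∫₂^t δ x^{δ-1} e(β x^k) dx satisfies |Φ(β,t)| ≪ min(t^δ, |β|^{-δ/k}), with implied constant depending only on δ and k. -/
open Real MeasureTheory intervalIntegral Set

private lemma e_eq (y : ℝ) : e y = Complex.exp ((2 * π * y : ℝ) * Complex.I) := by
  unfold e; congr 1; push_cast; ring

private lemma e_norm (y : ℝ) : ‖e y‖ = 1 := by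
  rw [e_eq, Complex.norm_exp_ofReal_mul_I]

private lemma cont_e (k : ℕ) (β : ℝ) : Continuous (fun x : ℝ => e (β * x ^ k)) := by
  unfold e
  exact Complex.continuous_exp.comp (continuous_const.mul
    (Complex.continuous_ofReal.comp (continuous_const.mul (continuous_pow k))))

private lemma intf (δ : ℝ) (k : ℕ) (β : ℝ) {a b : ℝ} (ha : 0 < a) (hb : 0 < b) :
    IntervalIntegrable (fun x : ℝ => ((δ * x ^ (δ - 1) : ℝ) : ℂ) * e (β * x ^ k))
      volume a b := by
  apply ContinuousOn.intervalIntegrable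
  intro x hx
  have hx0 : x ≠ 0 := (lt_of_lt_of_le (lt_min ha hb) hx.1).ne'
  have h1 : ContinuousAt (fun x : ℝ => ((δ * x ^ (δ - 1) : ℝ) : ℂ)) x :=
    Complex.continuous_ofReal.continuousAt.comp
      ((Real.continuousAt_rpow_const x _ (Or.inl hx0)).const_mul δ)
  exact (h1.mul (cont_e k β).continuousAt).continuousWithinAt

private lemma norm_integrand (k : ℕ) {δ : ℝ} (hδ0 : 0 < δ) (β : ℝ) {x : ℝ} (hx : 0 < x) :
    ‖((δ * x ^ (δ - 1) : ℝ) : ℂ) * e (β * x ^ k)‖ = δ * x ^ (δ - 1) := by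
  rw [norm_mul, e_norm, mul_one, Complex.norm_real, Real.norm_eq_abs, abs_of_nonneg]
  positivity

private lemma triv_bound (k : ℕ) {δ : ℝ} (hδ0 : 0 < δ) (hδ1 : δ < 1) (β : ℝ)
    {a t : ℝ} (ha : 0 < a) (hat : a ≤ t) :
    ‖∫ x in a..t, ((δ * x ^ (δ - 1) : ℝ) : ℂ) * e (β * x ^ k)‖ ≤ t ^ δ - a ^ δ := by
  have key : ∫ x in a..t, δ * x ^ (δ - 1) = t ^ δ - a ^ δ := by
    rw [intervalIntegral.integral_const_mul, integral_rpow (Or.inl (by linarith))]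
    rw [sub_add_cancel]
    field_simp
  have h1 : ‖∫ x in a..t, ((δ * x ^ (δ - 1) : ℝ) : ℂ) * e (β * x ^ k)‖ ≤
      |∫ x in a..t, δ * x ^ (δ - 1)| := by
    apply intervalIntegral.norm_integral_le_abs_of_norm_le
    · rw [ae_restrict_iff' measurableSet_uIoc]
      refine ae_of_all _ fun x hx => ?_
      rw [Set.uIoc_of_le hat] at hx
      rw [norm_integrand k hδ0 β (lt_trans ha hx.1)]
    · exact (intervalIntegrable_rpow' (by linarith)).const_mul δ
  rw [key] at h1
  rwa [abs_of_nonneg (by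
    have := Real.rpow_le_rpow ha.le hat hδ0.le
    linarith)] at h1

private lemma ibp_bound (k : ℕ) (hk : 1 ≤ k) {δ : ℝ} (hδ0 : 0 < δ) (hδ1 : δ < 1)
    {β : ℝ} (hβ : β ≠ 0) {a t : ℝ} (ha : 2 ≤ a) (hat : a ≤ t) :
    ‖∫ x in a..t, ((δ * x ^ (δ - 1) : ℝ) : ℂ) * e (β * x ^ k)‖ ≤
      3 * δ / (2 * π * k) * |β|⁻¹ * a ^ (δ - k) := by
  have hπ : (0:ℝ) < π := Real.pi_pos
  have hk0 : (0:ℝ) < k := by exact_mod_cast hk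
  have hk1 : (1:ℝ) ≤ k := by exact_mod_cast hk
  have hβ0 : 0 < |β| := abs_pos.mpr hβ
  have hmem : ∀ x ∈ Set.uIcc a t, 2 ≤ x := by
    intro x hx
    rw [Set.uIcc_of_le hat] at hx
    linarith [hx.1]
  have h0notin : (0:ℝ) ∉ Set.uIcc a t := fun h => by linarith [hmem 0 h]
  have hve : ∀ x : ℝ, e (β * x ^ k) =
      Complex.exp ((((2 * π * β : ℝ) : ℂ) * Complex.I) * (x:ℂ) ^ k) := by
    intro x; unfold e; congr 1; push_cast; ring
  set c : ℂ := ((2 * π * β : ℝ) : ℂ) * Complex.I with hc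
  have hc0 : c ≠ 0 := by
    rw [hc]
    refine mul_ne_zero (Complex.ofReal_ne_zero.mpr ?_) Complex.I_ne_zero
    exact mul_ne_zero (mul_ne_zero two_ne_zero hπ.ne') hβ
  have hkc0 : ((k:ℂ)) ≠ 0 := Nat.cast_ne_zero.mpr (by omega)
  set D : ℂ := (δ : ℂ) / (c * k) with hD
  set u : ℝ → ℂ := fun x => D * ((x ^ (δ - k) : ℝ) : ℂ) with hu
  set u' : ℝ → ℂ := fun x => D * (((δ - k) * x ^ (δ - k - 1) : ℝ) : ℂ) with hu'
  set v : ℝ → ℂ := fun x => e (β * x ^ k) with hv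
  set v' : ℝ → ℂ := fun x => c * k * ((x:ℂ) ^ (k - 1)) * e (β * x ^ k) with hv'
  -- derivatives
  have hderiv_v : ∀ x ∈ Set.uIcc a t, HasDerivAt v (v' x) x := by
    intro x _
    have h := ((hasDerivAt_pow k ((x:ℂ))).const_mul c).cexp
    have h2 := h.comp_ofReal
    have hveq : v = fun y : ℝ => Complex.exp (c * (y:ℂ) ^ k) := funext fun y => hve y
    rw [hveq]
    convert h2 using 1
    simp only [hv', hve]
    ring
  have hderiv_u : ∀ x ∈ Set.uIcc a t, HasDerivAt u (u' x) x := by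
    intro x hx
    have hx0 : x ≠ 0 := by have := hmem x hx; linarith
    have h := ((Real.hasDerivAt_rpow_const (p := δ - k) (Or.inl hx0)).ofReal_comp).const_mul D
    simpa [hu, hu'] using h
  -- integrability
  have hu'int : IntervalIntegrable u' volume a t := by
    apply ContinuousOn.intervalIntegrable
    intro x hx
    have hx0 : x ≠ 0 := by have := hmem x hx; linarith
    exact (continuousAt_const.mul (Complex.continuous_ofReal.continuousAt.comp
      ((Real.continuousAt_rpow_const x _ (Or.inl hx0)).const_mul _))).continuousWithinAt
  have hv'int : IntervalIntegrable v' volume a t :=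
    ((continuous_const.mul (Complex.continuous_ofReal.pow (k-1))).mul
      (cont_e k β)).intervalIntegrable a t
  -- integrand equality
  have heq : Set.EqOn (fun x : ℝ => ((δ * x ^ (δ - 1) : ℝ) : ℂ) * e (β * x ^ k))
      (fun x => u x * v' x) (Set.uIcc a t) := by
    intro x hx
    have hx0 : (0:ℝ) < x := by have := hmem x hx; linarith
    have hreal : x ^ (δ - k) * x ^ (k - 1 : ℕ) = x ^ (δ - 1) := by
      rw [← Real.rpow_natCast x (k-1), Nat.cast_sub hk, Nat.cast_one,
        ← Real.rpow_add hx0]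
      ring_nf
    have hDck : D * (c * k) = (δ : ℂ) := by
      rw [hD]; field_simp
    have expand : u x * v' x = (D * (c * k)) *
        ((x ^ (δ - k) * x ^ (k - 1 : ℕ) : ℝ) : ℂ) * e (β * x ^ k) := by
      simp only [hu, hv']
      push_cast
      ring
    simp only [expand, hreal, hDck]
    push_cast
    ring
  rw [intervalIntegral.integral_congr heq,
    intervalIntegral.integral_mul_deriv_eq_deriv_mul hderiv_u hderiv_v hu'int hv'int]
  -- norms
  have hDnorm : ‖D‖ = δ / (2 * π * |β| * k) := by
    rw [hD, hc, norm_div, norm_mul, norm_mul, Complex.norm_real, Complex.norm_I,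
      Complex.norm_natCast, Complex.norm_real, Real.norm_eq_abs, Real.norm_eq_abs,
      abs_of_pos hδ0, abs_mul, abs_mul, abs_of_pos (by norm_num : (0:ℝ) < 2),
      abs_of_pos hπ]
    ring
  have huvnorm : ∀ x : ℝ, 0 < x → ‖u x * v x‖ = ‖D‖ * x ^ (δ - k) := by
    intro x hx
    rw [norm_mul, hu, hv, norm_mul, e_norm, mul_one, Complex.norm_real, Real.norm_eq_abs,
      abs_of_nonneg (Real.rpow_nonneg hx.le _)]
  have ha0 : (0:ℝ) < a := by linarith
  have ht0 : (0:ℝ) < t := by linarith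
  have hmono : t ^ (δ - k) ≤ a ^ (δ - k) :=
    Real.rpow_le_rpow_of_nonpos ha0 hat (by linarith)
  have hδk : δ - (k:ℝ) < 0 := by linarith
  -- bound on the remaining integral
  have h2 : ‖∫ x in a..t, u' x * v x‖ ≤ ‖D‖ * a ^ (δ - k) := by
    have hb : ∀ᵐ x ∂(volume.restrict (Set.uIoc a t)),
        ‖u' x * v x‖ ≤ ‖D‖ * ((k - δ) * x ^ (δ - k - 1)) := by
      rw [ae_restrict_iff' measurableSet_uIoc]
      refine ae_of_all _ fun x hx => ?_
      have hx2 : 2 ≤ x := hmem x (Set.uIoc_subset_uIcc hx)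
      have hx0 : (0:ℝ) < x := by linarith
      rw [hu', hv, norm_mul, norm_mul, e_norm, mul_one, Complex.norm_real,
        Real.norm_eq_abs, abs_mul, abs_of_nonneg (Real.rpow_nonneg hx0.le _),
        abs_of_nonpos (by linarith : δ - (k:ℝ) ≤ 0)]
      rw [neg_sub]
    have hbi : IntervalIntegrable (fun x => ‖D‖ * ((k - δ) * x ^ (δ - k - 1)))
        volume a t :=
      (((intervalIntegrable_rpow (Or.inr h0notin)).const_mul _).const_mul _)
    have h3 := intervalIntegral.norm_integral_le_abs_of_norm_le hb hbi
    have hval : ∫ x in a..t, ‖D‖ * ((k - δ) * x ^ (δ - k - 1)) =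
        ‖D‖ * ((k - δ) * ((t ^ (δ - k) - a ^ (δ - k)) / (δ - k))) := by
      rw [intervalIntegral.integral_const_mul, intervalIntegral.integral_const_mul,
        integral_rpow (Or.inr ⟨by intro h; linarith, h0notin⟩)]
      norm_num
    rw [hval] at h3
    refine h3.trans ?_
    have hDn : (0:ℝ) ≤ ‖D‖ := norm_nonneg _
    have ht' : (0:ℝ) ≤ t ^ (δ - k) := Real.rpow_nonneg ht0.le _
    have : (k - δ) * ((t ^ (δ - k) - a ^ (δ - k)) / (δ - k)) =
        a ^ (δ - k) - t ^ (δ - k) := by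
      rw [show ((k:ℝ) - δ) = -(δ - k) by ring, neg_mul, mul_div_assoc',
        mul_div_cancel_left₀ _ hδk.ne, neg_sub]
    rw [this, abs_of_nonneg (by nlinarith)]
    nlinarith
  have hub : ‖u t * v t - u a * v a - ∫ x in a..t, u' x * v x‖ ≤ 3 * ‖D‖ * a ^ (δ - k) := by
    calc ‖u t * v t - u a * v a - ∫ x in a..t, u' x * v x‖
        ≤ ‖u t * v t - u a * v a‖ + ‖∫ x in a..t, u' x * v x‖ := norm_sub_le _ _
      _ ≤ ‖u t * v t‖ + ‖u a * v a‖ + ‖∫ x in a..t, u' x * v x‖ := by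
          linarith [norm_sub_le (u t * v t) (u a * v a)]
      _ ≤ ‖D‖ * a ^ (δ - k) + ‖D‖ * a ^ (δ - k) + ‖D‖ * a ^ (δ - k) := by
          rw [huvnorm t ht0, huvnorm a ha0]
          have hDn : (0:ℝ) ≤ ‖D‖ := norm_nonneg _
          nlinarith
      _ = 3 * ‖D‖ * a ^ (δ - k) := by ring
  refine hub.trans (le_of_eq ?_)
  rw [hDnorm]
  field_simp

/-- Φ(β,t) = ∫₂^t δ x^{δ-1} e(β x^k) dx ≪ min(t^δ, |β|^{-δ/k}), uniformly for 2 < t ≤ N^{1/k}. -/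
theorem stmt10 (k : ℕ) (hk : 1 ≤ k) (δ : ℝ) (hδ0 : 0 < δ) (hδ1 : δ < 1) :
    ∃ C > 0, ∀ (N : ℝ), 1 ≤ N → ∀ (t : ℝ), 2 < t → t ≤ N ^ ((1 : ℝ) / k) →
      ∀ (β : ℝ), β ≠ 0 →
      ‖∫ x in (2 : ℝ)..t, ((δ * x ^ (δ - 1) : ℝ) : ℂ) * e (β * x ^ k)‖ ≤
        C * min (t ^ δ) (|β| ^ (-(δ / k))) := by
  have hπ : (0:ℝ) < π := Real.pi_pos
  have hk0 : (0:ℝ) < k := by exact_mod_cast hk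
  have hk1 : (1:ℝ) ≤ k := by exact_mod_cast hk
  refine ⟨1 + 3 * δ / (2 * π * k), by positivity, ?_⟩
  intro N _ t ht2 _ β hβ
  set s : ℝ := 3 * δ / (2 * π * k) with hs
  have hs0 : 0 ≤ s := by positivity
  set C : ℝ := 1 + s with hC
  have hC1 : (1:ℝ) ≤ C := by linarith
  have hβ0 : 0 < |β| := abs_pos.mpr hβ
  have ht2' : (2:ℝ) ≤ t := ht2.le
  have ht0 : (0:ℝ) < t := by linarith
  set b : ℝ := |β| ^ (-(δ / k)) with hb
  have hbpos : 0 < b := Real.rpow_pos_of_pos hβ0 _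
  set X : ℝ := |β| ^ (-(1:ℝ) / k) with hX
  have hX0 : 0 < X := Real.rpow_pos_of_pos hβ0 _
  have hXδ : X ^ δ = b := by
    rw [hX, hb, ← Real.rpow_mul (abs_nonneg β)]
    congr 1
    field_simp
  have hXk : X ^ ((k:ℝ)) = |β|⁻¹ := by
    rw [hX, ← Real.rpow_mul (abs_nonneg β),
      show (-(1:ℝ)/k) * k = -1 by field_simp, Real.rpow_neg_one]
  have h2δ : (0:ℝ) ≤ 2 ^ δ := Real.rpow_nonneg (by norm_num) δ
  have htδ : (0:ℝ) ≤ t ^ δ := Real.rpow_nonneg ht0.le δ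
  have hXδ0 : (0:ℝ) ≤ X ^ δ := Real.rpow_nonneg hX0.le δ
  have claim1 : ‖∫ x in (2:ℝ)..t, ((δ * x ^ (δ - 1) : ℝ) : ℂ) * e (β * x ^ k)‖ ≤ t ^ δ := by
    have h := triv_bound k hδ0 hδ1 β (by norm_num : (0:ℝ) < 2) ht2'
    linarith
  have claim2 : ‖∫ x in (2:ℝ)..t, ((δ * x ^ (δ - 1) : ℝ) : ℂ) * e (β * x ^ k)‖ ≤ C * b := by
    rcases le_or_gt X 2 with hX2 | hX2
    · -- |β| is large: integrate by parts on the whole interval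
      have h := ibp_bound k hk hδ0 hδ1 hβ (le_refl (2:ℝ)) ht2'
      have e1 : |β|⁻¹ = X ^ δ * X ^ ((k:ℝ) - δ) := by
        rw [← Real.rpow_add hX0, ← hXk]
        ring_nf
      have e2 : X ^ ((k:ℝ) - δ) ≤ 2 ^ ((k:ℝ) - δ) :=
        Real.rpow_le_rpow hX0.le hX2 (by linarith)
      have e3 : (2:ℝ) ^ ((k:ℝ) - δ) * 2 ^ (δ - (k:ℝ)) = 1 := by
        rw [← Real.rpow_add (by norm_num)]
        norm_num
      have h2pos : (0:ℝ) < 2 ^ (δ - (k:ℝ)) := Real.rpow_pos_of_pos (by norm_num) _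
      calc ‖∫ x in (2:ℝ)..t, ((δ * x ^ (δ - 1) : ℝ) : ℂ) * e (β * x ^ k)‖
          ≤ s * |β|⁻¹ * 2 ^ (δ - (k:ℝ)) := by
            rw [hs]; exact_mod_cast h
        _ = s * X ^ δ * (X ^ ((k:ℝ) - δ) * 2 ^ (δ - (k:ℝ))) := by rw [e1]; ring
        _ ≤ s * X ^ δ * (2 ^ ((k:ℝ) - δ) * 2 ^ (δ - (k:ℝ))) := by
            have h0 : (0:ℝ) ≤ s * X ^ δ := by positivity
            exact mul_le_mul_of_nonneg_left
              (mul_le_mul_of_nonneg_right e2 h2pos.le) h0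
        _ = s * X ^ δ := by rw [e3, mul_one]
        _ ≤ C * b := by
            rw [← hXδ, hC, add_mul, one_mul]
            linarith
    · rcases le_or_gt t X with htX | htX
      · -- |β| small relative to t: trivial bound
        have h := triv_bound k hδ0 hδ1 β (by norm_num : (0:ℝ) < 2) ht2'
        have h2 : t ^ δ ≤ X ^ δ := Real.rpow_le_rpow ht0.le htX hδ0.le
        rw [← hXδ, hC, add_mul, one_mul]
        have hsX : (0:ℝ) ≤ s * X ^ δ := by positivity
        linarith
      · -- split at X
        have hsplit := intervalIntegral.integral_add_adjacent_intervals
          (intf δ k β (by norm_num : (0:ℝ) < 2) hX0) (intf δ k β hX0 ht0)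
        rw [← hsplit]
        have h1 := triv_bound k hδ0 hδ1 β (by norm_num : (0:ℝ) < 2) hX2.le
        have h2 := ibp_bound k hk hδ0 hδ1 hβ hX2.le htX.le
        have e4 : |β|⁻¹ * X ^ (δ - (k:ℝ)) = X ^ δ := by
          rw [← hXk, ← Real.rpow_add hX0]
          ring_nf
        have h2' : ‖∫ x in X..t, ((δ * x ^ (δ - 1) : ℝ) : ℂ) * e (β * x ^ k)‖ ≤
            s * X ^ δ := by
          calc ‖∫ x in X..t, ((δ * x ^ (δ - 1) : ℝ) : ℂ) * e (β * x ^ k)‖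
              ≤ s * |β|⁻¹ * X ^ (δ - (k:ℝ)) := by rw [hs]; exact_mod_cast h2
            _ = s * (|β|⁻¹ * X ^ (δ - (k:ℝ))) := by ring
            _ = s * X ^ δ := by rw [e4]
        calc ‖(∫ x in (2:ℝ)..X, ((δ * x ^ (δ - 1) : ℝ) : ℂ) * e (β * x ^ k)) +
              ∫ x in X..t, ((δ * x ^ (δ - 1) : ℝ) : ℂ) * e (β * x ^ k)‖
            ≤ ‖∫ x in (2:ℝ)..X, ((δ * x ^ (δ - 1) : ℝ) : ℂ) * e (β * x ^ k)‖ +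
              ‖∫ x in X..t, ((δ * x ^ (δ - 1) : ℝ) : ℂ) * e (β * x ^ k)‖ := norm_add_le _ _
          _ ≤ C * b := by
              rw [← hXδ, hC, add_mul, one_mul]
              linarith
  calc ‖∫ x in (2:ℝ)..t, ((δ * x ^ (δ - 1) : ℝ) : ℂ) * e (β * x ^ k)‖
      ≤ min (t ^ δ) (C * b) := le_min claim1 claim2
    _ ≤ C * min (t ^ δ) b := by
        rw [mul_min_of_nonneg _ _ (by linarith : (0:ℝ) ≤ C)]
        exact min_le_min (le_mul_of_one_le_left htδ hC1) le_rfl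
end

section
/- Let q ≥ 1, a be coprime integers and define S(a,q) = ∑_{1 ≤ x ≤ q, gcd(x,q)=1} e(a x^k / q). Then for every ε > 0, |S(a,q)| ≪_{k,ε} q^{1/2+ε}. -/
open Finset ZMod

set_option linter.unusedVariables false
-- LTE arithmetic core
lemma lte_key {p : ℕ} (hp : p.Prime) {c e t k : ℕ} (hk : k ≠ 0) (ht : t = k.factorization p)
    (hc : (Odd p ∧ c = 1) ∨ (p = 2 ∧ c = 2)) (n : ℤ)
    (h1 : (p:ℤ)^c ∣ n - 1) (hek : (p:ℤ)^e ∣ n^k - 1) : (p:ℤ)^(e-t) ∣ n - 1 := by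
  rcases eq_or_ne n 1 with rfl | hn1
  · simp
  rcases le_or_gt e t with h | het
  · simpa [Nat.sub_eq_zero_of_le h] using (dvd_refl _)
  have hc1 : 1 ≤ c := by rcases hc with ⟨_, rfl⟩ | ⟨_, rfl⟩ <;> norm_num
  have hpd1 : (p:ℤ) ∣ n - 1 := dvd_trans (dvd_pow_self _ (by omega)) h1
  have hx : ¬ (p:ℤ) ∣ n := by
    intro h
    have : (p:ℤ) ∣ 1 := by
      have := dvd_sub h hpd1
      simpa using this
    exact hp.one_lt.ne' (by exact_mod_cast Int.eq_one_of_dvd_one (by positivity) this)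
  have hfin : FiniteMultiplicity p k := Nat.finiteMultiplicity_iff.mpr ⟨hp.ne_one, Nat.pos_of_ne_zero hk⟩
  have hek' : emultiplicity p k = (t : ℕ∞) := by
    rw [hfin.emultiplicity_eq_multiplicity, ht, Nat.multiplicity_eq_factorization hp hk]
  have hLTE : emultiplicity (p:ℤ) (n^k - 1) = emultiplicity (p:ℤ) (n - 1) + t := by
    rcases hc with ⟨hodd, rfl⟩ | ⟨rfl, rfl⟩
    · have := Int.emultiplicity_pow_sub_pow hp hodd (y := 1) (by simpa using hpd1) hx k
      simpa [hek'] using this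
    · have h4 : (4:ℤ) ∣ n - 1 := by simpa using h1
      have := Int.two_pow_sub_pow' (x := n) (y := 1) k (by simpa using h4) hx
      rw [show n^k - 1 = n^k - 1^k by ring]
      simp only [Nat.cast_ofNat]
      rw [this]
      congr 1
      rw [show (2:ℤ) = ((2:ℕ):ℤ) by norm_num, Int.natCast_emultiplicity, hek']
  have he : (e : ℕ∞) ≤ emultiplicity (p:ℤ) (n - 1) + t :=
    hLTE ▸ le_emultiplicity_of_pow_dvd (by simpa using hek)
  have h2 : ((e - t : ℕ) : ℕ∞) ≤ emultiplicity (p:ℤ) (n - 1) := by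
    rcases eq_top_or_lt_top (emultiplicity (p:ℤ) (n - 1)) with hA | hA
    · simp [hA]
    · lift emultiplicity (p:ℤ) (n - 1) to ℕ using hA.ne with m hm
      rw [← Nat.cast_add] at he
      exact_mod_cast Nat.sub_le_of_le_add (by exact_mod_cast he)
  exact pow_dvd_of_le_emultiplicity h2
section
variable {p : ℕ}

lemma ker_bound (hp : p.Prime) {c e k t : ℕ} (hk : k ≠ 0) (ht : t = k.factorization p)
    (hc : (Odd p ∧ c = 1) ∨ (p = 2 ∧ c = 2)) (hce : c ≤ e) :
    Nat.card {ζ : rootsOfUnity k (ZMod (p^e)) //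
      ZMod.unitsMap (pow_dvd_pow p hce) (ζ : (ZMod (p^e))ˣ) = 1} ≤ p^t := by
  haveI : NeZero (p^e) := ⟨pow_ne_zero _ hp.pos.ne'⟩
  haveI : NeZero (p^t) := ⟨pow_ne_zero _ hp.pos.ne'⟩
  set L : {ζ : rootsOfUnity k (ZMod (p^e)) //
      ZMod.unitsMap (pow_dvd_pow p hce) (ζ : (ZMod (p^e))ˣ) = 1} → ℤ :=
    fun ζ => ((((ζ : (ZMod (p^e))ˣ) : ZMod (p^e)).val : ℤ)) with hL
  have hLcast : ∀ ζ, ((L ζ : ℤ) : ZMod (p^e)) = ((ζ : (ZMod (p^e))ˣ) : ZMod (p^e)) := by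
    intro ζ
    push_cast [hL]
    simp
  have key : ∀ ζ, (p:ℤ)^(e-t) ∣ (L ζ - 1) := by
    intro ζ
    obtain ⟨⟨u, hu⟩, hker⟩ := ζ
    have hroots : (p:ℤ)^e ∣ (L ⟨⟨u, hu⟩, hker⟩)^k - 1 := by
      have h1 : ((u : ZMod (p^e)))^k = 1 := by
        have h := congrArg Units.val ((mem_rootsOfUnity k u).mp hu)
        simpa using h
      have : (((L ⟨⟨u, hu⟩, hker⟩)^k - 1 : ℤ) : ZMod (p^e)) = 0 := by
        push_cast [hLcast]
        rw [h1]; ring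
      have := (ZMod.intCast_zmod_eq_zero_iff_dvd _ _).mp this
      exact_mod_cast this
    have hker' : (p:ℤ)^c ∣ L ⟨⟨u, hu⟩, hker⟩ - 1 := by
      set v := ZMod.castHom (pow_dvd_pow p hce) (ZMod (p^c)) with hv
      have h1 : v (u : ZMod (p^e)) = 1 := by
        have := congrArg Units.val hker
        simpa [ZMod.unitsMap, hv] using this
      have : ((L ⟨⟨u, hu⟩, hker⟩ - 1 : ℤ) : ZMod (p^c)) = 0 := by
        have h2 : ((L ⟨⟨u, hu⟩, hker⟩ : ℤ) : ZMod (p^c)) = v (((L ⟨⟨u, hu⟩, hker⟩ : ℤ) : ZMod (p^e))) := by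
          simp [hv]
        push_cast [h2, hLcast, h1]
        ring
      have := (ZMod.intCast_zmod_eq_zero_iff_dvd _ _).mp this
      exact_mod_cast this
    exact lte_key hp hk ht hc _ hker' hroots
  have hinj : Function.Injective (fun ζ => (((L ζ - 1) / (p:ℤ)^(e-t) : ℤ) : ZMod (p^t))) := by
    intro ζ₁ ζ₂ h
    have h₁ := key ζ₁
    have h₂ := key ζ₂
    obtain ⟨d, hd⟩ := (ZMod.intCast_eq_intCast_iff_dvd_sub _ _ _).mp h
    have e₁ := Int.ediv_mul_cancel h₁
    have e₂ := Int.ediv_mul_cancel h₂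
    have heq : L ζ₂ - L ζ₁ = ((p^t : ℕ):ℤ) * d * (p:ℤ)^(e-t) := by
      linear_combination ((p:ℤ)^(e-t)) * hd - e₂ + e₁
    have hee : (p:ℤ)^e ∣ L ζ₂ - L ζ₁ := by
      refine dvd_trans (pow_dvd_pow (p:ℤ) (show e ≤ t + (e-t) by omega)) ⟨d, ?_⟩
      rw [heq, pow_add]; push_cast; ring
    have hval : ((ζ₁ : (ZMod (p^e))ˣ) : ZMod (p^e)) = ((ζ₂ : (ZMod (p^e))ˣ) : ZMod (p^e)) := by
      have := (ZMod.intCast_eq_intCast_iff_dvd_sub (L ζ₁) (L ζ₂) (p^e)).mpr (by exact_mod_cast hee)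
      rwa [hLcast, hLcast] at this
    exact Subtype.ext (Subtype.ext (Units.ext hval))
  calc Nat.card {ζ : rootsOfUnity k (ZMod (p^e)) //
        ZMod.unitsMap (pow_dvd_pow p hce) (ζ : (ZMod (p^e))ˣ) = 1}
      ≤ Nat.card (ZMod (p^t)) := Nat.card_le_card_of_injective _ hinj
    _ = p^t := Nat.card_zmod _

end

lemma step_bound {p : ℕ} (hp : p.Prime) {c e k t : ℕ} (hk : k ≠ 0) (ht : t = k.factorization p)
    (hc : (Odd p ∧ c = 1) ∨ (p = 2 ∧ c = 2)) (hce : c ≤ e) :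
    Nat.card (rootsOfUnity k (ZMod (p^e)))
      ≤ Nat.card (rootsOfUnity k (ZMod (p^c))) * p^t := by
  haveI : NeZero (p^e) := ⟨pow_ne_zero _ hp.pos.ne'⟩
  haveI : NeZero (p^c) := ⟨pow_ne_zero _ hp.pos.ne'⟩
  set f : rootsOfUnity k (ZMod (p^e)) →* (ZMod (p^c))ˣ :=
    (ZMod.unitsMap (pow_dvd_pow p hce)).comp (Subgroup.subtype _) with hf
  have hcard : Nat.card (rootsOfUnity k (ZMod (p^e)))
      = Nat.card f.range * Nat.card f.ker := by
    rw [Subgroup.card_eq_card_quotient_mul_card_subgroup f.ker]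
    congr 1
    exact Nat.card_congr (QuotientGroup.quotientKerEquivRange f).toEquiv
  have hker : Nat.card f.ker ≤ p^t := by
    refine le_trans (le_of_eq (Nat.card_congr (Equiv.subtypeEquivRight fun ζ => ?_)))
      (ker_bound hp hk ht hc hce)
    simp [MonoidHom.mem_ker, hf]
  have hrange : Nat.card f.range ≤ Nat.card (rootsOfUnity k (ZMod (p^c))) := by
    apply Subgroup.card_le_of_le
    rintro x ⟨ζ, rfl⟩
    rw [mem_rootsOfUnity, ← map_pow]
    have hζ : ζ ^ k = 1 := by
      apply Subtype.ext
      push_cast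
      exact ζ.2
    rw [hζ, map_one]
  calc Nat.card (rootsOfUnity k (ZMod (p^e))) = Nat.card f.range * Nat.card f.ker := hcard
    _ ≤ Nat.card (rootsOfUnity k (ZMod (p^c))) * p^t :=
        Nat.mul_le_mul hrange hker

lemma rootCount_pp {p : ℕ} (hp : p.Prime) {k : ℕ} (hk : k ≠ 0) (e : ℕ) :
    Nat.card (rootsOfUnity k (ZMod (p^e))) ≤ 2 * k^2 := by
  haveI : Fact p.Prime := ⟨hp⟩
  have hkpos : 0 < k := Nat.pos_of_ne_zero hk
  haveI : NeZero k := ⟨hk⟩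
  have hpt : p ^ (k.factorization p) ≤ k := Nat.le_of_dvd hkpos (Nat.ordProj_dvd k p)
  rcases Nat.eq_zero_or_pos e with rfl | he
  · rw [pow_zero]
    calc Nat.card (rootsOfUnity k (ZMod 1)) ≤ Nat.card (ZMod 1)ˣ :=
          Nat.card_le_card_of_injective _ Subtype.coe_injective
      _ = 1 := Nat.card_unique
      _ ≤ 2 * k^2 := by nlinarith
  rcases hp.eq_two_or_odd' with rfl | hodd
  · rcases Nat.lt_or_ge e 2 with he2 | he2
    · interval_cases e
      rw [pow_one]
      calc Nat.card (rootsOfUnity k (ZMod 2)) ≤ Nat.card (ZMod 2)ˣ :=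
            Nat.card_le_card_of_injective _ Subtype.coe_injective
        _ = 1 := Nat.card_unique
        _ ≤ 2 * k^2 := by nlinarith
    · have := step_bound hp hk rfl (Or.inr ⟨rfl, rfl⟩) he2
      have h4 : Nat.card (rootsOfUnity k (ZMod (2^2))) ≤ 2 := by
        calc Nat.card (rootsOfUnity k (ZMod (2^2))) ≤ Nat.card (ZMod (2^2))ˣ :=
              Nat.card_le_card_of_injective _ Subtype.coe_injective
          _ = 2 := by
              rw [Nat.card_eq_fintype_card, ZMod.card_units_eq_totient]
              decide
      calc Nat.card (rootsOfUnity k (ZMod (2^e)))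
          ≤ Nat.card (rootsOfUnity k (ZMod (2^2))) * 2^(k.factorization 2) := this
        _ ≤ 2 * k := Nat.mul_le_mul h4 hpt
        _ ≤ 2 * k^2 := by nlinarith
  · have := step_bound hp hk rfl (Or.inl ⟨hodd, rfl⟩) he
    have hfield : Nat.card (rootsOfUnity k (ZMod (p^1))) ≤ k := by
      rw [pow_one]
      exact card_rootsOfUnity (k := k) (R := ZMod p)
    calc Nat.card (rootsOfUnity k (ZMod (p^e)))
        ≤ Nat.card (rootsOfUnity k (ZMod (p^1))) * p^(k.factorization p) := this
      _ ≤ k * k := Nat.mul_le_mul hfield hpt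
      _ ≤ 2 * k^2 := by nlinarith

lemma rootCount_mul {m n k : ℕ} (h : m.Coprime n) :
    Nat.card (rootsOfUnity k (ZMod (m*n)))
      = Nat.card (rootsOfUnity k (ZMod m)) * Nat.card (rootsOfUnity k (ZMod n)) := by
  let F : (ZMod (m*n))ˣ ≃* (ZMod m)ˣ × (ZMod n)ˣ :=
    (Units.mapEquiv (ZMod.chineseRemainder h).toMulEquiv).trans MulEquiv.prodUnits
  have e1 : Nat.card (rootsOfUnity k (ZMod (m*n)))
      = Nat.card {v : (ZMod m)ˣ × (ZMod n)ˣ // v ^ k = 1} := by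
    refine Nat.card_congr (Equiv.subtypeEquiv F.toEquiv fun u => ?_)
    rw [mem_rootsOfUnity]
    constructor
    · intro hu; rw [show (1 : (ZMod m)ˣ × (ZMod n)ˣ) = F 1 by simp, ← hu]; simp [← map_pow]
    · intro hu
      have : F (u^k) = F 1 := by simpa [map_pow] using hu
      exact F.injective this
  have e2 : Nat.card {v : (ZMod m)ˣ × (ZMod n)ˣ // v ^ k = 1}
      = Nat.card (rootsOfUnity k (ZMod m)) * Nat.card (rootsOfUnity k (ZMod n)) := by
    rw [show Nat.card (rootsOfUnity k (ZMod m)) * Nat.card (rootsOfUnity k (ZMod n))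
      = Nat.card ((rootsOfUnity k (ZMod m)) × (rootsOfUnity k (ZMod n))) from (Nat.card_prod _ _).symm]
    refine Nat.card_congr ?_
    refine Equiv.trans (Equiv.subtypeEquivRight fun v => ?_) (Equiv.subtypeProdEquivProd)
    rw [Prod.ext_iff]
    rfl
  rw [e1, e2]

lemma conj_stdAddChar {q : ℕ} [NeZero q] (x : ZMod q) :
    (starRingEnd ℂ) (ZMod.stdAddChar x) = ZMod.stdAddChar (-x) := by
  rw [ZMod.stdAddChar_apply, ZMod.stdAddChar_apply, AddChar.map_neg_eq_inv,
    Circle.coe_inv_eq_conj]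

lemma T_bound {q k : ℕ} [NeZero q] (hk : k ≠ 0) (a : (ZMod q)ˣ) :
    ‖∑ u : (ZMod q)ˣ, ZMod.stdAddChar ((a : ZMod q) * (u : ZMod q)^k)‖
      ≤ (Nat.card (rootsOfUnity k (ZMod q)) : ℝ) * Real.sqrt q := by
  classical
  set ψ := (ZMod.stdAddChar (N := q)) with hψ
  set T : ZMod q → ℂ := fun b => ∑ u : (ZMod q)ˣ, ψ (b * (u:ZMod q)^k) with hT
  set Nn := (univ.filter fun w : (ZMod q)ˣ => w^k = 1).card with hNn
  have hNcard : Nat.card (rootsOfUnity k (ZMod q)) = Nn := by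
    rw [Nat.card_eq_fintype_card, Fintype.card_subtype]
    congr 1
    ext w
    simp [mem_rootsOfUnity]
  have horth : ∀ z : ZMod q, ∑ b : ZMod q, ψ (b * z) = if z = 0 then (q:ℂ) else 0 := by
    intro z
    have := AddChar.sum_mulShift (ψ := ψ) z (ZMod.isPrimitive_stdAddChar q)
    simpa [ZMod.card] using this
  have hinv : ∀ (b : ZMod q) (c : (ZMod q)ˣ), T (b * (c : ZMod q)^k) = T b := by
    intro b c
    rw [hT]
    simp only
    rw [← Equiv.sum_comp (Equiv.mulLeft c) (fun u => ψ (b * (u:ZMod q)^k))]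
    apply Finset.sum_congr rfl
    intro u _
    congr 1
    simp only [Equiv.coe_mulLeft, Units.val_mul, mul_pow]
    ring
  have hms : ∑ b : ZMod q, (‖T b‖:ℝ)^2 = (q : ℝ) * (Nat.totient q) * Nn := by
    have hC : ∑ b : ZMod q, (T b * (starRingEnd ℂ) (T b))
        = ((q : ℝ) * (Nat.totient q) * Nn : ℝ) := by
      have e1 : ∀ b : ZMod q, T b * (starRingEnd ℂ) (T b)
          = ∑ u : (ZMod q)ˣ, ∑ v : (ZMod q)ˣ,
              ψ (b * ((u:ZMod q)^k - (v:ZMod q)^k)) := by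
        intro b
        rw [hT]
        simp only
        rw [map_sum, Finset.sum_mul_sum]
        refine Finset.sum_congr rfl fun u _ => Finset.sum_congr rfl fun v _ => ?_
        rw [conj_stdAddChar, ← AddChar.map_add_eq_mul]
        congr 1
        ring
      simp_rw [e1]
      rw [Finset.sum_comm]
      have e2 : ∀ u : (ZMod q)ˣ, ∑ b : ZMod q, ∑ v : (ZMod q)ˣ,
          ψ (b * ((u:ZMod q)^k - (v:ZMod q)^k)) = (Nn : ℂ) * q := by
        intro u
        rw [Finset.sum_comm]
        have e3 : ∀ v : (ZMod q)ˣ, ∑ b : ZMod q, ψ (b * ((u:ZMod q)^k - (v:ZMod q)^k))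
            = if v^k = u^k then (q:ℂ) else 0 := by
          intro v
          rw [horth]
          have hiff : ((u:ZMod q)^k - (v:ZMod q)^k = 0) ↔ (v^k = u^k) := by
            rw [sub_eq_zero]
            constructor
            · intro h
              exact Units.ext (by simp only [Units.val_pow_eq_pow_val]; exact h.symm)
            · intro h
              have := congrArg (Units.val) h
              simp only [Units.val_pow_eq_pow_val] at this
              exact this.symm
          rw [if_congr hiff rfl rfl]
        simp_rw [e3]
        rw [← Equiv.sum_comp (Equiv.mulLeft u) (fun v => if v^k = u^k then (q:ℂ) else 0)]
        have e4 : ∀ w : (ZMod q)ˣ, ((Equiv.mulLeft u w)^k = u^k) ↔ (w^k = 1) := by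
          intro w
          simp [mul_pow, mul_eq_left]
        simp only [e4]
        rw [← Finset.sum_filter, Finset.sum_const, ← hNn, nsmul_eq_mul]
      simp_rw [e2]
      rw [Finset.sum_const, Finset.card_univ, ZMod.card_units_eq_totient, nsmul_eq_mul]
      push_cast
      ring
    have : ((∑ b : ZMod q, (‖T b‖:ℝ)^2 : ℝ) : ℂ) = (((q : ℝ) * (Nat.totient q) * Nn : ℝ) : ℂ) := by
      push_cast
      push_cast at hC
      rw [← hC]
      refine Finset.sum_congr rfl fun b _ => ?_
      rw [Complex.mul_conj, Complex.normSq_eq_norm_sq]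
      push_cast
      ring
    exact_mod_cast this
  -- orbit bound
  set A : Finset (ZMod q) := Finset.image (fun c : (ZMod q)ˣ => ((a : ZMod q) * (c:ZMod q)^k)) univ with hA
  have hcardA : Nat.totient q ≤ Nn * A.card := by
    have hfib : ∀ b ∈ univ.image (fun c : (ZMod q)ˣ => ((a : ZMod q) * (c:ZMod q)^k)),
        (univ.filter fun c : (ZMod q)ˣ => ((a : ZMod q) * (c:ZMod q)^k) = b).card ≤ Nn := by
      intro b hb
      obtain ⟨c0, -, rfl⟩ := Finset.mem_image.mp hb
      rw [hNn]
      apply Finset.card_le_card_of_injOn (fun c => c * c0⁻¹)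
      · intro c hc
        simp only [Finset.coe_filter, Set.mem_setOf_eq, Finset.mem_filter, Finset.mem_univ, true_and] at hc ⊢
        rw [Units.mul_right_inj] at hc
        have hcc : c^k = c0^k := by
          apply Units.ext
          simp only [Units.val_pow_eq_pow_val]
          exact hc
        rw [mul_pow, hcc, ← mul_pow, mul_inv_cancel, one_pow]
      · intro x _ y _ h
        exact mul_right_cancel h
    have := Finset.card_le_mul_card_image
      (f := fun c : (ZMod q)ˣ => ((a : ZMod q) * (c:ZMod q)^k)) univ Nn hfib
    rwa [Finset.card_univ, ZMod.card_units_eq_totient] at this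
  have hsub : (A.card : ℝ) * ‖T ((a:ZMod q))‖^2 ≤ (q:ℝ) * (Nat.totient q) * Nn := by
    have h1 : ∑ b ∈ A, (‖T b‖:ℝ)^2 = (A.card : ℝ) * ‖T ((a:ZMod q))‖^2 := by
      rw [Finset.sum_congr rfl (fun b hb => show (‖T b‖:ℝ)^2 = ‖T ((a:ZMod q))‖^2 from ?_),
        Finset.sum_const, nsmul_eq_mul]
      obtain ⟨c, -, rfl⟩ := Finset.mem_image.mp hb
      rw [hinv]
    rw [← h1, ← hms]
    exact Finset.sum_le_sum_of_subset_of_nonneg (Finset.subset_univ A) (fun b _ _ => sq_nonneg _)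
  have htot : (0:ℝ) < Nat.totient q := by
    exact_mod_cast Nat.totient_pos.mpr (Nat.pos_of_ne_zero (NeZero.ne q))
  have hX : ‖T ((a:ZMod q))‖^2 ≤ (Nn:ℝ)^2 * q := by
    have h2 : (Nat.totient q : ℝ) * ‖T ((a:ZMod q))‖^2
        ≤ ((Nn:ℝ) * A.card) * ‖T ((a:ZMod q))‖^2 :=
      mul_le_mul_of_nonneg_right (by exact_mod_cast hcardA) (sq_nonneg _)
    have h3 : (Nn:ℝ) * ((A.card:ℝ) * ‖T ((a:ZMod q))‖^2)
        ≤ (Nn:ℝ) * ((q:ℝ) * (Nat.totient q) * Nn) :=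
      mul_le_mul_of_nonneg_left hsub (by positivity)
    have h4 : (Nat.totient q : ℝ) * ‖T ((a:ZMod q))‖^2
        ≤ (Nat.totient q : ℝ) * ((Nn:ℝ)^2 * q) := by
      calc (Nat.totient q : ℝ) * ‖T ((a:ZMod q))‖^2
          ≤ ((Nn:ℝ) * A.card) * ‖T ((a:ZMod q))‖^2 := h2
        _ = (Nn:ℝ) * ((A.card:ℝ) * ‖T ((a:ZMod q))‖^2) := by ring
        _ ≤ (Nn:ℝ) * ((q:ℝ) * (Nat.totient q) * Nn) := h3
        _ = (Nat.totient q : ℝ) * ((Nn:ℝ)^2 * q) := by ring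
    exact le_of_mul_le_mul_left h4 htot
  have hfinal : ‖T ((a:ZMod q))‖ ≤ (Nn:ℝ) * Real.sqrt q := by
    rw [show ‖T ((a:ZMod q))‖ = Real.sqrt (‖T ((a:ZMod q))‖^2) from
      (Real.sqrt_sq (norm_nonneg _)).symm]
    refine le_trans (Real.sqrt_le_sqrt hX) ?_
    rw [Real.sqrt_mul (by positivity), Real.sqrt_sq (by positivity)]
  rw [hNcard]
  exact hfinal


lemma sum_eq_T {q : ℕ} [NeZero q] (hq : 2 ≤ q) (k : ℕ) (a : ℤ) :
    ∑ x ∈ (Finset.Icc 1 q).filter (fun x : ℕ => Nat.gcd x q = 1),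
        e ((a : ℝ) * (x : ℝ) ^ k / q)
      = ∑ u : (ZMod q)ˣ, ZMod.stdAddChar (((a : ZMod q)) * (u : ZMod q)^k) := by
  haveI : Fact (1 < q) := ⟨by omega⟩
  refine Finset.sum_bij'
    (i := fun x hx => ZMod.unitOfCoprime x (by
      simp only [Finset.mem_filter] at hx
      exact hx.2))
    (j := fun u _ => ((u : ZMod q)).val) ?_ ?_ ?_ ?_ ?_
  · intro x hx
    exact Finset.mem_univ _
  · intro u hu
    simp only [Finset.mem_filter, Finset.mem_Icc]
    refine ⟨⟨?_, ?_⟩, ZMod.val_coe_unit_coprime u⟩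
    · have h0 : ((u : ZMod q)).val ≠ 0 := by
        rw [Ne, ZMod.val_eq_zero]
        exact Units.ne_zero u
      omega
    · exact le_of_lt (ZMod.val_lt _)
  · intro x hx
    simp only [Finset.mem_filter, Finset.mem_Icc] at hx
    have hxq : x < q := by
      rcases Nat.lt_or_ge x q with h | h
      · exact h
      · exfalso
        have : x = q := by omega
        subst this
        rw [Nat.gcd_self] at hx
        omega
    simp only [ZMod.coe_unitOfCoprime, ZMod.val_natCast]
    exact Nat.mod_eq_of_lt hxq
  · intro u hu
    apply Units.ext
    rw [ZMod.coe_unitOfCoprime]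
    rw [ZMod.natCast_val, ZMod.cast_id]
  · intro x hx
    have key : ∀ h : Nat.Coprime x q, e ((a : ℝ) * (x : ℝ) ^ k / q)
        = ZMod.stdAddChar ((a : ZMod q) *
          ((ZMod.unitOfCoprime x h : (ZMod q)ˣ) : ZMod q)^k) := by
      intro h
      rw [show (a : ZMod q) * ((ZMod.unitOfCoprime x h : (ZMod q)ˣ) : ZMod q)^k
          = ((a * (x:ℤ)^k : ℤ) : ZMod q) from by
        rw [ZMod.coe_unitOfCoprime]; push_cast; ring]
      rw [ZMod.stdAddChar_coe]
      unfold e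
      congr 1
      have hq0 : (q:ℂ) ≠ 0 := by
        exact_mod_cast (by omega : (q:ℤ) ≠ 0)
      push_cast
      field_simp
    exact key _

lemma rootCount_one (k : ℕ) : Nat.card (rootsOfUnity k (ZMod 1)) = 1 := by
  have h1 : Nat.card (rootsOfUnity k (ZMod 1)) ≤ Nat.card (ZMod 1)ˣ :=
    Nat.card_le_card_of_injective _ Subtype.coe_injective
  have h2 : Nat.card (ZMod 1)ˣ = 1 := Nat.card_unique
  have h3 : 0 < Nat.card (rootsOfUnity k (ZMod 1)) := Nat.card_pos
  omega

lemma N_le (k : ℕ) (hk : k ≠ 0) (ε : ℝ) (hε : 0 < ε) :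
    ∃ C : ℝ, 1 ≤ C ∧ ∀ q : ℕ, 1 ≤ q →
      (Nat.card (rootsOfUnity k (ZMod q)) : ℝ) ≤ C * (q:ℝ) ^ ε := by
  classical
  set D : ℕ := 2 * k^2 with hD
  have hD1 : (1:ℝ) ≤ D := by
    have h1 : 0 < k := Nat.pos_of_ne_zero hk
    have h2 : 0 < k^2 := pow_pos h1 2
    have : 1 ≤ D := by omega
    exact_mod_cast this
  set B : ℕ := Nat.ceil ((D:ℝ) ^ (1/ε : ℝ)) with hB
  refine ⟨(D:ℝ)^B, one_le_pow₀ hD1, ?_⟩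
  intro q hq
  have hq0 : q ≠ 0 := by omega
  have hfact : Nat.card (rootsOfUnity k (ZMod q))
      = q.factorization.prod fun p e => Nat.card (rootsOfUnity k (ZMod (p^e))) := by
    refine Nat.multiplicative_factorization
      (fun m => Nat.card (rootsOfUnity k (ZMod m)))
      (fun x y h => rootCount_mul h) (rootCount_one k) hq0
  rw [hfact, Finsupp.prod]
  set P := q.factorization.support with hP
  have hsplit : ∏ p ∈ P, (Nat.card (rootsOfUnity k (ZMod (p^(q.factorization p)))) : ℕ)
      = (∏ p ∈ P.filter (· ≤ B), Nat.card (rootsOfUnity k (ZMod (p^(q.factorization p)))))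
        * ∏ p ∈ P.filter (¬ · ≤ B), Nat.card (rootsOfUnity k (ZMod (p^(q.factorization p)))) :=
    (Finset.prod_filter_mul_prod_filter_not P _ _).symm
  -- bound small part
  have hsmall : (∏ p ∈ P.filter (· ≤ B),
      (Nat.card (rootsOfUnity k (ZMod (p^(q.factorization p)))) : ℝ)) ≤ (D:ℝ)^B := by
    have hcard : (P.filter (· ≤ B)).card ≤ B := by
      have hsub : P.filter (· ≤ B) ⊆ Finset.Icc 1 B := by
        intro p hp
        simp only [Finset.mem_filter] at hp
        have hprime : p.Prime := Nat.prime_of_mem_primeFactors (by rw [hP] at hp; exact hp.1)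
        simp only [Finset.mem_Icc]
        exact ⟨hprime.one_lt.le.trans' (by omega), hp.2⟩
      calc (P.filter (· ≤ B)).card ≤ (Finset.Icc 1 B).card := Finset.card_le_card hsub
        _ = B := by rw [Nat.card_Icc]; omega
    calc (∏ p ∈ P.filter (· ≤ B),
        (Nat.card (rootsOfUnity k (ZMod (p^(q.factorization p)))) : ℝ))
        ≤ ∏ p ∈ P.filter (· ≤ B), (D:ℝ) := by
          refine Finset.prod_le_prod (fun _ _ => by positivity) (fun p hp => ?_)
          have hprime : p.Prime := Nat.prime_of_mem_primeFactors
            (by rw [hP] at hp; exact (Finset.mem_filter.mp hp).1)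
          exact_mod_cast rootCount_pp hprime hk _
      _ = (D:ℝ)^((P.filter (· ≤ B)).card) := by rw [Finset.prod_const]
      _ ≤ (D:ℝ)^B := pow_le_pow_right₀ hD1 hcard
  -- bound large part
  have hlarge : (∏ p ∈ P.filter (¬ · ≤ B),
      (Nat.card (rootsOfUnity k (ZMod (p^(q.factorization p)))) : ℝ)) ≤ (q:ℝ) ^ ε := by
    have h1 : ∀ p ∈ P.filter (¬ · ≤ B),
        (Nat.card (rootsOfUnity k (ZMod (p^(q.factorization p)))) : ℝ)
          ≤ ((p^(q.factorization p) : ℕ) : ℝ) ^ ε := by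
      intro p hp
      simp only [Finset.mem_filter] at hp
      have hprime : p.Prime := Nat.prime_of_mem_primeFactors (by rw [hP] at hp; exact hp.1)
      have hpB : B < p := by omega
      have hDp : (D:ℝ) ≤ (p:ℝ) ^ ε := by
        have h2 : ((D:ℝ) ^ (1/ε : ℝ)) ≤ (p:ℝ) := by
          calc ((D:ℝ) ^ (1/ε : ℝ)) ≤ (B:ℝ) := Nat.le_ceil _ |>.trans (by exact_mod_cast le_refl (B:ℝ))
            _ ≤ (p:ℝ) := by exact_mod_cast hpB.le
        calc (D:ℝ) = (D:ℝ) ^ ((1/ε) * ε) := by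
              rw [one_div_mul_cancel hε.ne', Real.rpow_one]
          _ = ((D:ℝ) ^ (1/ε : ℝ)) ^ ε := Real.rpow_mul (by positivity) _ _
          _ ≤ (p:ℝ) ^ ε := Real.rpow_le_rpow (Real.rpow_nonneg (by positivity) _) h2 hε.le
      have hppow : (p:ℝ) ^ ε ≤ ((p^(q.factorization p) : ℕ) : ℝ) ^ ε := by
        apply Real.rpow_le_rpow (by positivity) _ hε.le
        have he1 : 1 ≤ q.factorization p := by
          rw [hP] at hp
          have := hp.1
          rw [Finsupp.mem_support_iff] at this
          omega
        calc (p:ℝ) = ((p^1 : ℕ):ℝ) := by norm_num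
          _ ≤ ((p^(q.factorization p) : ℕ) : ℝ) := by
            exact_mod_cast Nat.pow_le_pow_right hprime.pos he1
      calc (Nat.card (rootsOfUnity k (ZMod (p^(q.factorization p)))) : ℝ)
          ≤ (D:ℝ) := by exact_mod_cast rootCount_pp hprime hk _
        _ ≤ (p:ℝ) ^ ε := hDp
        _ ≤ _ := hppow
    calc (∏ p ∈ P.filter (¬ · ≤ B),
        (Nat.card (rootsOfUnity k (ZMod (p^(q.factorization p)))) : ℝ))
        ≤ ∏ p ∈ P.filter (¬ · ≤ B), ((p^(q.factorization p) : ℕ) : ℝ) ^ ε :=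
          Finset.prod_le_prod (fun _ _ => by positivity) h1
      _ ≤ ∏ p ∈ P, ((p^(q.factorization p) : ℕ) : ℝ) ^ ε := by
          have hone : (1:ℝ) ≤ ∏ p ∈ P.filter (· ≤ B), ((p^(q.factorization p) : ℕ) : ℝ) ^ ε := by
            calc (1:ℝ) = ∏ _p ∈ P.filter (· ≤ B), (1:ℝ) := (Finset.prod_const_one).symm
              _ ≤ _ := by
                refine Finset.prod_le_prod (fun _ _ => zero_le_one) (fun p hp => ?_)
                have hprime : p.Prime := Nat.prime_of_mem_primeFactors
                  (by rw [hP] at hp; exact (Finset.mem_filter.mp hp).1)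
                apply Real.one_le_rpow _ hε.le
                have : 1 ≤ p ^ (q.factorization p) := Nat.one_le_pow _ _ hprime.pos
                exact_mod_cast this
          have hsplit2 := Finset.prod_filter_mul_prod_filter_not P (· ≤ B)
            (fun p => ((p^(q.factorization p) : ℕ) : ℝ) ^ ε)
          rw [← hsplit2]
          exact le_mul_of_one_le_left (Finset.prod_nonneg fun _ _ => by positivity) hone
      _ = ((∏ p ∈ P, (p^(q.factorization p) : ℕ) : ℕ) : ℝ) ^ ε := by
          push_cast
          rw [← Real.finset_prod_rpow P _ (fun p _ => by positivity) ε]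
      _ = (q:ℝ) ^ ε := by
          congr 1
          have := Nat.factorization_prod_pow_eq_self hq0
          rw [Finsupp.prod] at this
          exact_mod_cast congrArg (Nat.cast (R := ℝ)) this
  calc ((∏ p ∈ P, Nat.card (rootsOfUnity k (ZMod (p^(q.factorization p)))) : ℕ) : ℝ)
      = (∏ p ∈ P.filter (· ≤ B), (Nat.card (rootsOfUnity k (ZMod (p^(q.factorization p)))) : ℝ))
        * ∏ p ∈ P.filter (¬ · ≤ B), (Nat.card (rootsOfUnity k (ZMod (p^(q.factorization p)))) : ℝ) := by
        rw [hsplit]; push_cast; ring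
    _ ≤ (D:ℝ)^B * (q:ℝ) ^ ε := by
        apply mul_le_mul hsmall hlarge (Finset.prod_nonneg fun _ _ => by positivity)
          (by positivity)

/-- Complete exponential sum bound: S(a,q) ≪ q^{1/2+ε} for gcd(a,q)=1. -/
theorem stmt12 (k : ℕ) (hk : 1 ≤ k) (ε : ℝ) (hε : 0 < ε) :
    ∃ C > 0, ∀ (q : ℕ) (a : ℤ), 1 ≤ q → Int.gcd a q = 1 →
      ‖∑ x ∈ (Finset.Icc 1 q).filter (fun x : ℕ => Nat.gcd x q = 1),
          e ((a : ℝ) * (x : ℝ) ^ k / q)‖ ≤ C * (q : ℝ) ^ ((1 : ℝ) / 2 + ε) := by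
  have hk0 : k ≠ 0 := by omega
  obtain ⟨C, hC1, hCbound⟩ := N_le k hk0 ε hε
  refine ⟨C, by linarith, ?_⟩
  intro q a hq hgcd
  rcases eq_or_lt_of_le hq with h1 | h2
  · -- q = 1
    have hq1 : q = 1 := h1.symm
    subst hq1
    have hset : (Finset.Icc 1 1).filter (fun x : ℕ => Nat.gcd x 1 = 1) = {1} := by
      decide
    rw [hset, Finset.sum_singleton]
    simp only [Nat.cast_one]
    have hnorm : ‖e ((a : ℝ) * (1 : ℝ) ^ k / 1)‖ = 1 := by
      unfold e
      rw [show (2 * Real.pi * Complex.I * ((a : ℝ) * (1:ℝ)^k / 1 : ℝ) : ℂ)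
          = ((2 * Real.pi * ((a : ℝ) * (1:ℝ)^k / 1) : ℝ) : ℂ) * Complex.I by push_cast; ring]
      exact Complex.norm_exp_ofReal_mul_I _
    rw [hnorm]
    rw [Real.one_rpow, mul_one]
    linarith
  · -- q ≥ 2
    haveI : NeZero q := ⟨by omega⟩
    -- (a : ZMod q) is a unit
    have hcop : IsCoprime (a : ℤ) (q : ℤ) := Int.isCoprime_iff_gcd_eq_one.mpr hgcd
    obtain ⟨u, v, huv⟩ := hcop
    have hmul : ((a : ZMod q)) * ((u : ZMod q)) = 1 := by
      have : (((u * a + v * q : ℤ)) : ZMod q) = 1 := by rw [huv]; norm_num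
      push_cast at this
      rw [ZMod.natCast_self] at this
      rw [mul_comm]
      simpa using this
    have hunit : IsUnit ((a : ZMod q)) := IsUnit.of_mul_eq_one _ hmul
    set au := hunit.unit with hau
    have hspec : ((au : (ZMod q)ˣ) : ZMod q) = (a : ZMod q) := hunit.unit_spec
    rw [sum_eq_T (by omega) k a]
    have hTB := T_bound hk0 au
    rw [hspec] at hTB
    have hN := hCbound q hq
    have hsqrt : Real.sqrt q = (q:ℝ) ^ ((1:ℝ)/2) := by
      rw [Real.sqrt_eq_rpow]
    have hqpos : (0:ℝ) < q := by positivity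
    calc ‖∑ w : (ZMod q)ˣ, ZMod.stdAddChar (((a : ZMod q)) * (w : ZMod q)^k)‖
        ≤ (Nat.card (rootsOfUnity k (ZMod q)) : ℝ) * Real.sqrt q := hTB
      _ ≤ (C * (q:ℝ) ^ ε) * Real.sqrt q :=
          mul_le_mul_of_nonneg_right hN (Real.sqrt_nonneg _)
      _ = C * (q:ℝ) ^ ((1:ℝ)/2 + ε) := by
          rw [hsqrt, mul_assoc, ← Real.rpow_add hqpos]
          ring_nf
end
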